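/- arXiv:0704.3922 — 7 statements merged into one kernel-verified Lean document; each statement's English description precedes it below -/
import Mathlib

section
/- Let k ≥ 1 be an integer, let c₀ > 0 and η ≥ 0 be constants, and let h : ℝ → ℝ be of class C^{k+1} with |h^{(l)}(y)| ≤ η for all y and all l ∈ {0,…,k+1}, and with 1 + h'(y) ≥ c₀ for all y. Let τ be the inverse of y ↦ y + h(y). Then there exists a constant K, depending only on k and c₀, such that for every l ∈ {1,…,k+1} and every y ∈ ℝ: |τ^{(l)}(y)| ≤ K(η + η^{l−1}). -/
/-!
Differentiating `τ + h ∘ τ = id` gives `τ' = 1 / (1 + h' ∘ τ)`, so `|τ'| ≤ 1 / c₀`, and then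
`τ'' = -(h'' ∘ τ) · τ'³`. Put `λ = max 1 η`. If `|τ^{(j+1)}| ≤ K λ^j` for `j ≤ n`, then the
Faà di Bruno bound gives `|(h'' ∘ τ)^{(i)}| ≤ C η λ^i`, and with the Leibniz rule
`|τ^{(n+2)}| ≤ C' η λ^n ≤ C' λ^(n+1)`, where `C'` depends only on `n` and `K`.
By induction this gives `|τ^{(l)}| ≤ K η λ^(l-2)` for `l ≥ 2`, and `η λ^(l-2) ≤ η + η^(l-1)`.
-/

open Finset
open scoped Nat

section IteratedDerivBounds

variable {f g : ℝ → ℝ} {x A B r : ℝ}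

theorem abs_iteratedDeriv_mul_le {N : WithTop ℕ∞} {n : ℕ} (hf : ContDiff ℝ N f)
    (hg : ContDiff ℝ N g) (hn : n ≤ N) (hr : 0 ≤ r)
    (hfA : ∀ i ≤ n, |iteratedDeriv i f x| ≤ A * r ^ i)
    (hgB : ∀ i ≤ n, |iteratedDeriv i g x| ≤ B * r ^ i) :
    |iteratedDeriv n (fun y => f y * g y) x| ≤ 2 ^ n * A * B * r ^ n := by
  have hA : 0 ≤ A := by simpa using (abs_nonneg _).trans (hfA 0 n.zero_le)
  have hB : 0 ≤ B := by simpa using (abs_nonneg _).trans (hgB 0 n.zero_le)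
  simp only [← Real.norm_eq_abs, ← norm_iteratedFDeriv_eq_norm_iteratedDeriv] at hfA hgB ⊢
  calc _ ≤ ∑ i ∈ range (n + 1), (n.choose i : ℝ) * ‖iteratedFDeriv ℝ i f x‖ *
        ‖iteratedFDeriv ℝ (n - i) g x‖ := norm_iteratedFDeriv_mul_le hf hg x hn
    _ ≤ ∑ i ∈ range (n + 1), (n.choose i : ℝ) * (A * r ^ i) * (B * r ^ (n - i)) := by
      gcongr with i hi
      · exact hfA i (by grind)
      · exact hgB (n - i) (by grind)
    _ = (∑ i ∈ range (n + 1), (n.choose i : ℝ)) * (A * B * r ^ n) := by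
      rw [sum_mul]
      refine sum_congr rfl fun i hi => ?_
      rw [← pow_mul_pow_sub r (Nat.le_of_lt_succ (mem_range.1 hi))]
      ring
    _ = 2 ^ n * A * B * r ^ n := by
      rw [← Nat.cast_sum, Nat.sum_range_choose]
      push_cast
      ring

theorem abs_iteratedDeriv_pow_le {n : ℕ} (hf : ContDiff ℝ n f) (hr : 0 ≤ r)
    (hfA : ∀ i ≤ n, |iteratedDeriv i f x| ≤ A * r ^ i) (p : ℕ) :
    ∀ i ≤ n, |iteratedDeriv i (fun y => f y ^ p) x| ≤ (2 ^ n * A) ^ p * r ^ i := by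
  have hA : 0 ≤ A := by simpa using (abs_nonneg _).trans (hfA 0 n.zero_le)
  induction p with
  | zero =>
    intro i _
    rcases i.eq_zero_or_pos with rfl | hi
    · simp
    · simp [iteratedDeriv_const, hi.ne', hr]
  | succ p ih =>
    intro i hi
    simp only [pow_succ]
    calc _ ≤ 2 ^ i * (2 ^ n * A) ^ p * A * r ^ i :=
          abs_iteratedDeriv_mul_le (hf.pow p) hf (mod_cast hi) hr
            (fun j hj => ih j (hj.trans hi)) (fun j hj => hfA j (hj.trans hi))
      _ = (2 ^ n * A) ^ p * (2 ^ i * A) * r ^ i := by ring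
      _ ≤ (2 ^ n * A) ^ p * (2 ^ n * A) * r ^ i := by gcongr; exact one_le_two

end IteratedDerivBounds

-- The size of `τ^{(i+1)}`: bounded for `i = 0`, and `O(η)` for small `η`, `O(η ^ i)` for large `η`
-- when `i ≥ 1`.
def derivWeight (η : ℝ) : ℕ → ℝ
  | 0 => 1
  | i + 1 => η * max 1 η ^ i

theorem derivWeight_nonneg {η : ℝ} (hη : 0 ≤ η) (i : ℕ) : 0 ≤ derivWeight η i := by
  cases i <;> simp only [derivWeight] <;> positivity

theorem derivWeight_le_pow (η : ℝ) (i : ℕ) : derivWeight η i ≤ max 1 η ^ i := by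
  cases i with
  | zero => simp [derivWeight]
  | succ i =>
    rw [derivWeight, pow_succ']
    gcongr
    exact le_max_right _ _

theorem derivWeight_le_add_pow {η : ℝ} (hη : 0 ≤ η) (i : ℕ) : derivWeight η i ≤ η + η ^ i := by
  cases i with
  | zero => simp [derivWeight, hη]
  | succ i =>
    rw [derivWeight]
    rcases le_total η 1 with h1 | h1
    · rw [max_eq_left h1, one_pow, mul_one]
      linarith [pow_nonneg hη (i + 1)]
    · rw [max_eq_right h1, ← pow_succ']
      linarith

structure IsNearIdentityInverse (k : ℕ) (c₀ η : ℝ) (h τ : ℝ → ℝ) : Prop where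
  contDiff : ContDiff ℝ (k + 1) h
  abs_iteratedDeriv_le : ∀ l ≤ k + 1, ∀ y : ℝ, |iteratedDeriv l h y| ≤ η
  le_one_add_deriv : ∀ y : ℝ, c₀ ≤ 1 + deriv h y
  add_comp_eq : ∀ y : ℝ, τ y + h (τ y) = y

namespace IsNearIdentityInverse

variable {k : ℕ} {c₀ η : ℝ} {h τ : ℝ → ℝ} (H : IsNearIdentityInverse k c₀ η h τ)
include H

theorem nonneg : 0 ≤ η :=
  (abs_nonneg _).trans (H.abs_iteratedDeriv_le 0 (k + 1).zero_le 0)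

theorem hasDerivAt_id_add (x : ℝ) : HasDerivAt (fun x => x + h x) (1 + deriv h x) x :=
  (hasDerivAt_id x).add ((H.contDiff.differentiable (by simp)) x).hasDerivAt

variable (hc₀ : 0 < c₀)
include hc₀

theorem one_add_deriv_pos (x : ℝ) : 0 < 1 + deriv h x :=
  hc₀.trans_le (H.le_one_add_deriv x)

theorem contDiff_inverse : ContDiff ℝ (k + 1) τ := by
  have hmono : StrictMono fun x => x + h x := strictMono_of_deriv_pos fun x => by
    rw [(H.hasDerivAt_id_add x).deriv]; exact H.one_add_deriv_pos hc₀ x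
  let e := hmono.orderIsoOfSurjective _ fun y => ⟨τ y, H.add_comp_eq y⟩
  have he : (e.toHomeomorph.symm : ℝ → ℝ) = τ :=
    funext fun y => e.symm_apply_eq.2 (H.add_comp_eq y).symm
  rw [← he]
  exact e.toHomeomorph.contDiff_symm_deriv (fun x => (H.one_add_deriv_pos hc₀ x).ne')
    H.hasDerivAt_id_add (contDiff_id.add H.contDiff)

theorem deriv_inverse (y : ℝ) : deriv τ y = (1 + deriv h (τ y))⁻¹ := by
  have hτ := ((H.contDiff_inverse hc₀).differentiable (by simp) y).hasDerivAt
  have hcomp := (H.hasDerivAt_id_add (τ y)).comp y hτ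
  rw [show ((fun x => x + h x) ∘ τ) = id from funext H.add_comp_eq] at hcomp
  exact eq_inv_of_mul_eq_one_right (hcomp.unique (hasDerivAt_id y))

theorem abs_deriv_inverse_le (y : ℝ) : |deriv τ y| ≤ c₀⁻¹ := by
  rw [H.deriv_inverse hc₀, abs_of_pos (inv_pos.2 (H.one_add_deriv_pos hc₀ _))]
  exact inv_anti₀ hc₀ (H.le_one_add_deriv _)

theorem deriv_deriv_inverse (hk : 1 ≤ k) :
    deriv (deriv τ) = fun y => -(deriv (deriv h) (τ y) * deriv τ y ^ 3) := by
  funext y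
  have hh' : Differentiable ℝ (deriv h) := by
    have := H.contDiff.differentiable_iteratedDeriv 1 (by exact_mod_cast (by omega : 1 < k + 1))
    rwa [iteratedDeriv_one] at this
  have hτ := ((H.contDiff_inverse hc₀).differentiable (by simp) y).hasDerivAt
  have hu : HasDerivAt (fun y => (1 + deriv h (τ y))⁻¹) _ y :=
    (((hh' (τ y)).hasDerivAt.comp y hτ).const_add 1).inv (H.one_add_deriv_pos hc₀ _).ne'
  rw [show deriv τ = fun y => (1 + deriv h (τ y))⁻¹ from funext (H.deriv_inverse hc₀), hu.deriv,
    H.deriv_inverse hc₀ y, Function.comp_apply]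
  field_simp

theorem abs_iteratedDeriv_add_two_le {n : ℕ} (hn : n + 2 ≤ k + 1) {K : ℝ} (hK : 1 ≤ K)
    (hτ : ∀ i ≤ n, ∀ y, |iteratedDeriv (i + 1) τ y| ≤ K * max 1 η ^ i) (y : ℝ) :
    |iteratedDeriv (n + 2) τ y| ≤ 2 ^ (4 * n) * n ! * K ^ (n + 3) * derivWeight η (n + 1) := by
  set L := max 1 η
  have hL : 1 ≤ L := le_max_left _ _
  have hh : ContDiff ℝ (n + 1 + 1) h := H.contDiff.of_le (by exact_mod_cast hn)
  have hτc : ContDiff ℝ (n + 1 + 1) τ := (H.contDiff_inverse hc₀).of_le (by exact_mod_cast hn)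
  have hcomp : ∀ i ≤ n, |iteratedDeriv i (fun y => deriv (deriv h) (τ y)) y| ≤
      n ! * K ^ n * η * L ^ i := by
    intro i hi
    have hC : ∀ j ≤ i, ‖iteratedFDeriv ℝ j (deriv (deriv h)) (τ y)‖ ≤ η := fun j hj => by
      rw [norm_iteratedFDeriv_eq_norm_iteratedDeriv, ← iteratedDeriv_succ', ← iteratedDeriv_succ']
      exact H.abs_iteratedDeriv_le (j + 2) (by omega) _
    have hD : ∀ j, 1 ≤ j → j ≤ i → ‖iteratedFDeriv ℝ j τ y‖ ≤ (K * L) ^ j := by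
      rintro (_ | j) hj1 hji
      · omega
      rw [norm_iteratedFDeriv_eq_norm_iteratedDeriv, mul_pow]
      calc |iteratedDeriv (j + 1) τ y| ≤ K * L ^ j := hτ j (by omega) y
        _ ≤ K ^ (j + 1) * L ^ (j + 1) :=
          mul_le_mul (le_self_pow₀ hK (by omega)) (pow_le_pow_right₀ hL (by omega))
            (by positivity) (by positivity)
    have := norm_iteratedFDeriv_comp_le hh.deriv'.deriv' hτc.of_succ.of_succ
      (by exact_mod_cast hi) y hC hD
    rw [norm_iteratedFDeriv_eq_norm_iteratedDeriv] at this
    calc _ ≤ i ! * η * (K * L) ^ i := this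
      _ = i ! * K ^ i * η * L ^ i := by ring
      _ ≤ n ! * K ^ n * η * L ^ i := by
        have := H.nonneg
        gcongr
  have hcube : ∀ i ≤ n, |iteratedDeriv i (fun y => deriv τ y ^ 3) y| ≤ (2 ^ n * K) ^ 3 * L ^ i :=
    abs_iteratedDeriv_pow_le hτc.deriv'.of_succ (by positivity)
      (fun i hi => by rw [← iteratedDeriv_succ']; exact hτ i hi y) 3
  rw [iteratedDeriv_succ', iteratedDeriv_succ', H.deriv_deriv_inverse hc₀ (by omega),
    iteratedDeriv_fun_neg, abs_neg]
  calc _ ≤ 2 ^ n * (n ! * K ^ n * η) * (2 ^ n * K) ^ 3 * L ^ n :=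
        abs_iteratedDeriv_mul_le (f := fun y => deriv (deriv h) (τ y))
          (hh.deriv'.deriv'.comp hτc.of_succ.of_succ) (hτc.deriv'.of_succ.pow 3)
          le_rfl (by positivity) hcomp hcube
    _ = 2 ^ (4 * n) * n ! * K ^ (n + 3) * derivWeight η (n + 1) := by
      rw [derivWeight]
      ring

end IsNearIdentityInverse

theorem IsNearIdentityInverse.exists_forall_abs_iteratedDeriv_le (k : ℕ) {c₀ : ℝ} (hc₀ : 0 < c₀) :
    ∃ K : ℝ, 1 ≤ K ∧ ∀ η h τ, IsNearIdentityInverse k c₀ η h τ →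
      ∀ i ≤ k, ∀ y, |iteratedDeriv (i + 1) τ y| ≤ K * derivWeight η i := by
  suffices ∀ n ≤ k, ∃ K : ℝ, 1 ≤ K ∧ ∀ η h τ, IsNearIdentityInverse k c₀ η h τ →
      ∀ i ≤ n, ∀ y, |iteratedDeriv (i + 1) τ y| ≤ K * derivWeight η i from this k le_rfl
  intro n
  induction n with
  | zero =>
    refine fun _ => ⟨max 1 c₀⁻¹, le_max_left _ _, fun η h τ H i hi y => ?_⟩
    obtain rfl : i = 0 := by omega
    simpa [derivWeight] using (H.abs_deriv_inverse_le hc₀ y).trans (le_max_right _ _)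
  | succ n ih =>
    intro hn
    obtain ⟨K, hK, hbound⟩ := ih (by omega)
    refine ⟨max K (2 ^ (4 * n) * n ! * K ^ (n + 3)), le_max_of_le_left hK,
      fun η h τ H i hi y => ?_⟩
    have hw := derivWeight_nonneg H.nonneg
    rcases (show i ≤ n ∨ i = n + 1 by omega) with hi | rfl
    · exact (hbound η h τ H i hi y).trans (by gcongr; exacts [hw i, le_max_left _ _])
    · refine (H.abs_iteratedDeriv_add_two_le hc₀ (by omega) hK (fun j hj z => ?_) y).trans ?_
      · exact (hbound η h τ H j hj z).trans (by gcongr; exact derivWeight_le_pow η j)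
      · gcongr
        exacts [hw _, le_max_right _ _]

theorem stmt_2_general (k : ℕ) (c₀ : ℝ) (hc₀ : 0 < c₀) :
    ∃ K : ℝ, ∀ (η : ℝ), 0 ≤ η → ∀ (h τ : ℝ → ℝ),
      ContDiff ℝ (k + 1) h →
      (∀ l ≤ k + 1, ∀ y : ℝ, |iteratedDeriv l h y| ≤ η) →
      (∀ y : ℝ, c₀ ≤ 1 + deriv h y) →
      (∀ y : ℝ, τ y + h (τ y) = y) →
      ∀ l : ℕ, 1 ≤ l → l ≤ k + 1 → ∀ y : ℝ,
        |iteratedDeriv l τ y| ≤ K * (η + η ^ (l - 1)) := by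
  obtain ⟨K, hK, hbound⟩ := IsNearIdentityInverse.exists_forall_abs_iteratedDeriv_le k hc₀
  refine ⟨K, fun η hη h τ hh hb hlow hinv l hl1 hlk y => ?_⟩
  obtain ⟨i, rfl⟩ : ∃ i, l = i + 1 := ⟨l - 1, by omega⟩
  rw [Nat.add_sub_cancel]
  calc _ ≤ K * derivWeight η i := hbound η h τ ⟨hh, hb, hlow, hinv⟩ i (by omega) y
    _ ≤ K * (η + η ^ i) := by gcongr; exact derivWeight_le_add_pow hη i

/-- Bound (btl): there is a constant `K = K(k, c₀)` such that the inverse `τ` of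
`y ↦ y + h(y)` satisfies `|τ^{(l)}(y)| ≤ K(η + η^{l−1})` for `l = 1,…,k+1`. -/
theorem stmt_2 (k : ℕ) (hk : 1 ≤ k) (c₀ : ℝ) (hc₀ : 0 < c₀) :
    ∃ K : ℝ, ∀ (η : ℝ), 0 ≤ η → ∀ (h τ : ℝ → ℝ),
      ContDiff ℝ (k + 1) h →
      (∀ l ≤ k + 1, ∀ y : ℝ, |iteratedDeriv l h y| ≤ η) →
      (∀ y : ℝ, c₀ ≤ 1 + deriv h y) →
      (∀ y : ℝ, τ y + h (τ y) = y) →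
      ∀ l : ℕ, 1 ≤ l → l ≤ k + 1 → ∀ y : ℝ,
        |iteratedDeriv l τ y| ≤ K * (η + η ^ (l - 1)) :=
  stmt_2_general k c₀ hc₀
end

section
/- Let k ≥ 1 be an integer, let c₀ > 0 and η ≥ 0 be constants, and let h : ℝ → ℝ be of class C^{k+1} with |h^{(l)}(y)| ≤ η for all y and all l ∈ {0,…,k+1}, and with 1 + h'(y) ≥ c₀ for all y. Let τ be the inverse of y ↦ y + h(y). Then there exist a constant K depending only on k and c₀, and functions α_{l,r} : ℝ → ℝ for 0 ≤ r ≤ l ≤ k, such that: (a) for every l ∈ {0,…,k}, every φ ∈ C^l(ℝ) and every y ∈ ℝ, the l-th derivative of y ↦ φ(τ(y))τ'(y) equals φ^{(l)}(τ(y)) + Σ_{r=0}^{l} α_{l,r}(y) φ^{(r)}(τ(y)); and (b) for every l ∈ {0,…,k} and every y, (1 + 1/τ'(y)) Σ_{r=0}^{l} |α_{l,r}(y)| ≤ K(1 + η)(η + η^k). -/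
/-!
Write `M = max 1 η` and `ε = min 1 η`, so that `ε * M = η`. Bounds of the form
`|u⁽ʲ⁾| ≤ C * M ^ j` for `j ≤ n` (`BoundedDerivs n C M u`) are stable under products by Leibniz
(at the cost of a factor `2 ^ n`), and passing from `u` to `u'` multiplies the constant by `M`.

Since `τ' = (1 + h' ∘ τ)⁻¹`, we have `τ'' = -(h'' ∘ τ) τ'³` and `(h⁽ᵐ⁾ ∘ τ)' = (h⁽ᵐ⁺¹⁾ ∘ τ) τ'`, so
induction on the number of derivatives gives `BoundedDerivs k C M τ'`; as moreover
`|τ' - 1| ≤ (1 + c₀⁻¹) ε` and `τ'' = O(η) = O(ε M)`, also `BoundedDerivs k (C ε) M (τ' - 1)`.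
The coefficients `α_{l,r}` obey a recursion built from `α_{l,·}'`, `τ' α_{l,·}` and `τ' - 1`, hence
`|α_{l,r}| ≤ C ε M ^ l ≤ C ε M ^ k = C η M ^ (k - 1) ≤ C (η + η ^ k)`.
-/

open Finset

def BoundedDerivs (n : ℕ) (C M : ℝ) (u : ℝ → ℝ) : Prop :=
  ContDiff ℝ n u ∧ ∀ j ≤ n, ∀ y, |iteratedDeriv j u y| ≤ C * M ^ j

namespace BoundedDerivs

variable {n : ℕ} {C C' M : ℝ} {u v : ℝ → ℝ}

theorem abs_le (hu : BoundedDerivs n C M u) (y : ℝ) : |u y| ≤ C := by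
  simpa using hu.2 0 (Nat.zero_le n) y

theorem nonneg (hu : BoundedDerivs n C M u) : 0 ≤ C :=
  (abs_nonneg _).trans (hu.abs_le 0)

theorem mono (hu : BoundedDerivs n C M u) (hC : C ≤ C') (hM : 0 ≤ M) :
    BoundedDerivs n C' M u :=
  ⟨hu.1, fun j hj y => (hu.2 j hj y).trans (by gcongr)⟩

theorem of_le {m : ℕ} (hu : BoundedDerivs n C M u) (hmn : m ≤ n) : BoundedDerivs m C M u :=
  ⟨hu.1.of_le (by exact_mod_cast hmn), fun j hj => hu.2 j (hj.trans hmn)⟩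

theorem zero_fun (hC : 0 ≤ C) (hM : 0 ≤ M) : BoundedDerivs n C M 0 :=
  ⟨contDiff_const, fun j _ y => by simpa using by positivity⟩

theorem neg (hu : BoundedDerivs n C M u) : BoundedDerivs n C M (-u) :=
  ⟨hu.1.neg, fun j hj y => by simpa [iteratedDeriv_neg] using hu.2 j hj y⟩

theorem add (hu : BoundedDerivs n C M u) (hv : BoundedDerivs n C' M v) :
    BoundedDerivs n (C + C') M (u + v) := by
  refine ⟨hu.1.add hv.1, fun j hj y => ?_⟩
  have hj' : (j : WithTop ℕ∞) ≤ n := by exact_mod_cast hj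
  rw [iteratedDeriv_add (hu.1.of_le hj').contDiffAt (hv.1.of_le hj').contDiffAt, add_mul]
  exact (abs_add_le _ _).trans (add_le_add (hu.2 j hj y) (hv.2 j hj y))

theorem mul (hu : BoundedDerivs n C M u) (hv : BoundedDerivs n C' M v) (hM : 0 ≤ M) :
    BoundedDerivs n (2 ^ n * C * C') M (u * v) := by
  refine ⟨hu.1.mul hv.1, fun j hj y => ?_⟩
  have hleib := norm_iteratedFDeriv_mul_le hu.1 hv.1 y (n := j) (by exact_mod_cast hj)
  simp only [norm_iteratedFDeriv_eq_norm_iteratedDeriv, Real.norm_eq_abs] at hleib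
  have hterm : ∀ i ∈ range (j + 1), (j.choose i : ℝ) * |iteratedDeriv i u y| *
      |iteratedDeriv (j - i) v y| ≤ j.choose i * (C * C' * M ^ j) := by
    intro i hi
    have hij : i + (j - i) = j := by have := mem_range.1 hi; omega
    rw [mul_assoc, show M ^ j = M ^ i * M ^ (j - i) by rw [← pow_add, hij], mul_mul_mul_comm]
    have := hu.nonneg
    gcongr
    exacts [hu.2 i (by omega) y, hv.2 (j - i) (by omega) y]
  calc |iteratedDeriv j (u * v) y|
      ≤ ∑ i ∈ range (j + 1), (j.choose i : ℝ) * (C * C' * M ^ j) :=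
        hleib.trans (sum_le_sum hterm)
    _ = 2 ^ j * C * C' * M ^ j := by
        rw [← sum_mul, ← Nat.cast_sum, Nat.sum_range_choose]; push_cast; ring
    _ ≤ 2 ^ n * C * C' * M ^ j := by
        have := hu.nonneg; have := hv.nonneg
        gcongr
        norm_num

end BoundedDerivs

theorem boundedDerivs_zero_iff {C M : ℝ} {u : ℝ → ℝ} :
    BoundedDerivs 0 C M u ↔ Continuous u ∧ ∀ y, |u y| ≤ C := by
  simp [BoundedDerivs, contDiff_zero]

theorem boundedDerivs_succ_iff {n : ℕ} {C M : ℝ} {u : ℝ → ℝ} :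
    BoundedDerivs (n + 1) C M u ↔
      Differentiable ℝ u ∧ (∀ y, |u y| ≤ C) ∧ BoundedDerivs n (C * M) M (deriv u) := by
  simp only [BoundedDerivs, Nat.cast_add, Nat.cast_one, contDiff_succ_iff_deriv]
  constructor
  · rintro ⟨⟨hd, -, hcd⟩, hb⟩
    refine ⟨hd, fun y => by simpa using hb 0 (Nat.zero_le _) y, hcd, fun j hj y => ?_⟩
    rw [← iteratedDeriv_succ', mul_assoc, ← pow_succ']
    exact hb (j + 1) (by omega) y
  · rintro ⟨hd, h0, hcd, hb⟩
    refine ⟨⟨hd, by simp, hcd⟩, fun j hj y => ?_⟩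
    rcases j with _ | j
    · simpa using h0 y
    · rw [iteratedDeriv_succ', pow_succ', ← mul_assoc]
      exact hb j (by omega) y

structure IdAddInverse (k : ℕ) (c₀ η : ℝ) (h τ : ℝ → ℝ) : Prop where
  c₀_pos : 0 < c₀
  contDiff : ContDiff ℝ (k + 1) h
  abs_iteratedDeriv_le : ∀ l ≤ k + 1, ∀ y, |iteratedDeriv l h y| ≤ η
  le_one_add_deriv : ∀ y, c₀ ≤ 1 + deriv h y
  apply_add_apply : ∀ y, τ y + h (τ y) = y

namespace IdAddInverse

section

variable {k : ℕ} {c₀ η : ℝ} {h τ : ℝ → ℝ} (S : IdAddInverse k c₀ η h τ)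
include S

theorem nonneg : 0 ≤ η :=
  (abs_nonneg _).trans (by simpa using S.abs_iteratedDeriv_le 0 (Nat.zero_le _) 0)

theorem one_add_deriv_pos (x : ℝ) : 0 < 1 + deriv h x :=
  S.c₀_pos.trans_le (S.le_one_add_deriv x)

theorem differentiable_iteratedDeriv {m : ℕ} (hm : m ≤ k) :
    Differentiable ℝ (iteratedDeriv m h) :=
  S.contDiff.differentiable_iteratedDeriv m (by exact_mod_cast Nat.lt_succ_of_le hm)

theorem hasStrictDerivAt_id_add (x : ℝ) :
    HasStrictDerivAt (fun x => x + h x) (1 + deriv h x) x :=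
  (hasStrictDerivAt_id x).add (S.contDiff.hasStrictDerivAt (by simp))

theorem left_inverse (x : ℝ) : τ (x + h x) = x := by
  have hmono : StrictMono (fun x => x + h x) := strictMono_of_deriv_pos fun x => by
    rw [(S.hasStrictDerivAt_id_add x).hasDerivAt.deriv]
    exact S.one_add_deriv_pos x
  exact hmono.injective (S.apply_add_apply (x + h x))

theorem hasDerivAt (y : ℝ) : HasDerivAt τ (1 + deriv h (τ y))⁻¹ y := by
  have := (S.hasStrictDerivAt_id_add (τ y)).to_local_left_inverse
    (S.one_add_deriv_pos (τ y)).ne' (Filter.Eventually.of_forall S.left_inverse)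
  rw [S.apply_add_apply] at this
  exact this.hasDerivAt

theorem differentiable : Differentiable ℝ τ := fun y => (S.hasDerivAt y).differentiableAt

theorem deriv_eq : deriv τ = fun y => (1 + deriv h (τ y))⁻¹ :=
  funext fun y => (S.hasDerivAt y).deriv

theorem deriv_pos (y : ℝ) : 0 < deriv τ y := by
  rw [S.deriv_eq]; exact inv_pos.2 (S.one_add_deriv_pos _)

theorem abs_deriv_le (y : ℝ) : |deriv τ y| ≤ c₀⁻¹ := by
  rw [abs_of_pos (S.deriv_pos y), S.deriv_eq]
  exact inv_anti₀ S.c₀_pos (S.le_one_add_deriv _)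

theorem abs_deriv_sub_one_le (y : ℝ) : |deriv τ y - 1| ≤ (1 + c₀⁻¹) * min 1 η := by
  have hc := inv_pos.2 S.c₀_pos
  have hτ' := S.abs_deriv_le y
  rw [mul_min_of_nonneg _ _ (by positivity), mul_one]
  refine le_min ((abs_sub _ _).trans (by simpa [add_comm] using hτ')) ?_
  have hd := S.one_add_deriv_pos (τ y)
  have hh : |deriv h (τ y)| ≤ η := by
    simpa using S.abs_iteratedDeriv_le 1 (by omega) (τ y)
  have hsub : deriv τ y - 1 = -deriv h (τ y) * deriv τ y := by
    rw [S.deriv_eq]; field_simp; ring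
  have := S.nonneg
  rw [hsub, abs_mul, abs_neg]
  calc |deriv h (τ y)| * |deriv τ y| ≤ η * c₀⁻¹ := by gcongr
    _ ≤ (1 + c₀⁻¹) * η := by nlinarith

theorem hasDerivAt_iteratedDeriv_comp {m : ℕ} (hm : m ≤ k) (y : ℝ) :
    HasDerivAt (fun z => iteratedDeriv m h (τ z))
      (iteratedDeriv (m + 1) h (τ y) * deriv τ y) y := by
  rw [iteratedDeriv_succ]
  exact ((S.differentiable_iteratedDeriv hm) (τ y)).hasDerivAt.comp y
    (S.differentiable y).hasDerivAt

theorem deriv_iteratedDeriv_comp {m : ℕ} (hm : m ≤ k) :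
    deriv (fun z => iteratedDeriv m h (τ z)) =
      (fun z => iteratedDeriv (m + 1) h (τ z)) * deriv τ :=
  funext fun y => (S.hasDerivAt_iteratedDeriv_comp hm y).deriv

theorem continuous_deriv : Continuous (deriv τ) := by
  rw [S.deriv_eq]
  exact (continuous_const.add ((S.contDiff.continuous_deriv (by simp)).comp
    S.differentiable.continuous)).inv₀ fun y => (S.one_add_deriv_pos (τ y)).ne'

theorem hasDerivAt_deriv (hk : 1 ≤ k) (y : ℝ) :
    HasDerivAt (deriv τ) (-(iteratedDeriv 2 h (τ y) * deriv τ y ^ 3)) y := by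
  have hτ' : deriv τ = fun z => (1 + iteratedDeriv 1 h (τ z))⁻¹ := by
    simpa only [iteratedDeriv_one] using S.deriv_eq
  have hd := S.one_add_deriv_pos (τ y)
  have := ((hasDerivAt_const y 1).fun_add (S.hasDerivAt_iteratedDeriv_comp hk y)).fun_inv
    (by simpa using hd.ne')
  rw [hτ']
  refine this.congr_deriv ?_
  simp only [S.deriv_eq, iteratedDeriv_one, zero_add, one_add_one_eq_two]
  field_simp

theorem deriv_deriv (hk : 1 ≤ k) :
    deriv (deriv τ) = -((fun z => iteratedDeriv 2 h (τ z)) * deriv τ * deriv τ * deriv τ) :=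
  funext fun y => by simp [(S.hasDerivAt_deriv hk y).deriv]; ring

theorem boundedDerivs_deriv_deriv (hk : 1 ≤ k) {n : ℕ} {C C' M : ℝ} (hM : 0 ≤ M)
    (hg : BoundedDerivs n C M fun z => iteratedDeriv 2 h (τ z))
    (hτ : BoundedDerivs n C' M (deriv τ)) :
    BoundedDerivs n (8 ^ n * C * C' ^ 3) M (deriv (deriv τ)) := by
  rw [S.deriv_deriv hk]
  convert (((hg.mul hτ hM).mul hτ hM).mul hτ hM).neg using 1
  rw [show (8 : ℝ) = 2 ^ 3 by norm_num, ← pow_mul]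
  ring

theorem boundedDerivs_iteratedDeriv_comp_succ {n m : ℕ} {C D : ℝ} (hm : m + 1 + n ≤ k + 1)
    (hg : BoundedDerivs n (C * η) (max 1 η) fun z => iteratedDeriv (m + 1) h (τ z))
    (hτ : BoundedDerivs n C (max 1 η) (deriv τ)) (hD : 1 ≤ D) (hCD : 2 ^ n * C ^ 2 ≤ D) :
    BoundedDerivs (n + 1) (D * η) (max 1 η) fun z => iteratedDeriv m h (τ z) := by
  have hη := S.nonneg
  refine boundedDerivs_succ_iff.2
    ⟨fun y => (S.hasDerivAt_iteratedDeriv_comp (by omega) y).differentiableAt,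
      fun y => (S.abs_iteratedDeriv_le m (by omega) (τ y)).trans (le_mul_of_one_le_left hη hD), ?_⟩
  rw [S.deriv_iteratedDeriv_comp (by omega)]
  refine (hg.mul hτ (by positivity)).mono ?_ (by positivity)
  calc 2 ^ n * (C * η) * C = 2 ^ n * C ^ 2 * η := by ring
    _ ≤ D * η := by gcongr
    _ ≤ D * η * max 1 η := le_mul_of_one_le_right (by positivity) (le_max_left _ _)

theorem boundedDerivs_deriv_succ {n : ℕ} {C D : ℝ} (hn : n + 1 ≤ k)
    (hg : BoundedDerivs n (C * η) (max 1 η) fun z => iteratedDeriv 2 h (τ z))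
    (hτ : BoundedDerivs n C (max 1 η) (deriv τ)) (hD : c₀⁻¹ ≤ D) (hCD : 8 ^ n * C ^ 4 ≤ D) :
    BoundedDerivs (n + 1) D (max 1 η) (deriv τ) := by
  have hη := S.nonneg
  refine boundedDerivs_succ_iff.2 ⟨fun y => (S.hasDerivAt_deriv (by omega) y).differentiableAt,
    fun y => (S.abs_deriv_le y).trans hD, ?_⟩
  refine (S.boundedDerivs_deriv_deriv (by omega) (by positivity) hg hτ).mono ?_ (by positivity)
  calc 8 ^ n * (C * η) * C ^ 3 = 8 ^ n * C ^ 4 * η := by ring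
    _ ≤ D * max 1 η := by
        have hD0 : 0 ≤ D := (by positivity : (0 : ℝ) ≤ 8 ^ n * C ^ 4).trans hCD
        gcongr
        exact le_max_right 1 η

theorem boundedDerivs_deriv_sub_one_succ {n : ℕ} {C : ℝ} (hn : n + 1 ≤ k)
    (hg : BoundedDerivs n (C * η) (max 1 η) fun z => iteratedDeriv 2 h (τ z))
    (hτ : BoundedDerivs n C (max 1 η) (deriv τ)) :
    BoundedDerivs (n + 1) ((1 + c₀⁻¹ + 8 ^ n * C ^ 4) * min 1 η) (max 1 η) (deriv τ - 1) := by
  have hε : 0 ≤ min 1 η := le_min zero_le_one S.nonneg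
  have h8 : 0 ≤ 8 ^ n * C ^ 4 := by positivity
  refine boundedDerivs_succ_iff.2
    ⟨fun y => (S.hasDerivAt_deriv (by omega) y).differentiableAt.sub_const 1,
      fun y => (S.abs_deriv_sub_one_le y).trans (mul_le_mul_of_nonneg_right (by linarith) hε), ?_⟩
  rw [show deriv (deriv τ - 1) = deriv (deriv τ) from funext fun y => deriv_sub_const 1]
  refine (S.boundedDerivs_deriv_deriv (by omega) (by positivity) hg hτ).mono ?_ (by positivity)
  calc 8 ^ n * (C * η) * C ^ 3 = 8 ^ n * C ^ 4 * (min 1 η * max 1 η) := by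
        rw [min_mul_max, one_mul]; ring
    _ ≤ (1 + c₀⁻¹ + 8 ^ n * C ^ 4) * min 1 η * max 1 η := by
        rw [← mul_assoc]; gcongr; linarith [inv_pos.2 S.c₀_pos]

theorem one_add_one_div_deriv_le (y : ℝ) : 1 + 1 / deriv τ y ≤ 2 * (1 + η) := by
  rw [S.deriv_eq, one_div, inv_inv]
  have := (abs_le.1 (by simpa using S.abs_iteratedDeriv_le 1 (by omega) (τ y))).2
  linarith [S.nonneg]

end

theorem exists_boundedDerivs_iteratedDeriv_comp_and_deriv (k : ℕ) (c₀ : ℝ) (n : ℕ) :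
    ∃ C : ℝ, ∀ {η : ℝ} {h τ : ℝ → ℝ}, IdAddInverse k c₀ η h τ →
      (∀ m, m + n ≤ k + 1 →
        BoundedDerivs n (C * η) (max 1 η) fun z => iteratedDeriv m h (τ z)) ∧
      (n ≤ k → BoundedDerivs n C (max 1 η) (deriv τ)) := by
  induction n with
  | zero =>
    refine ⟨max 1 c₀⁻¹, fun {η h τ} S => ⟨fun m hm => ?_, fun _ => ?_⟩⟩
    · exact boundedDerivs_zero_iff.2
        ⟨(S.contDiff.continuous_iteratedDeriv m (by exact_mod_cast hm)).comp
          S.differentiable.continuous,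
        fun y => (S.abs_iteratedDeriv_le m (by omega) (τ y)).trans
          (le_mul_of_one_le_left S.nonneg (le_max_left _ _))⟩
    · exact boundedDerivs_zero_iff.2
        ⟨S.continuous_deriv, fun y => (S.abs_deriv_le y).trans (le_max_right _ _)⟩
  | succ n ih =>
    obtain ⟨C, hC⟩ := ih
    refine ⟨max (max 1 c₀⁻¹) (max (2 ^ n * C ^ 2) (8 ^ n * C ^ 4)),
      fun S => ⟨fun m hm => ?_, fun hn => ?_⟩⟩
    all_goals obtain ⟨hg, hτ⟩ := hC S
    · exact S.boundedDerivs_iteratedDeriv_comp_succ (by omega) (hg (m + 1) (by omega))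
        (hτ (by omega))
        (le_max_of_le_left (le_max_left _ _)) (le_max_of_le_right (le_max_left _ _))
    · exact S.boundedDerivs_deriv_succ hn (hg 2 (by omega)) (hτ (by omega))
        (le_max_of_le_left (le_max_right _ _)) (le_max_of_le_right (le_max_right _ _))

theorem exists_boundedDerivs_deriv (k : ℕ) (c₀ : ℝ) :
    ∃ C : ℝ, ∀ {η : ℝ} {h τ : ℝ → ℝ}, IdAddInverse k c₀ η h τ →
      BoundedDerivs k C (max 1 η) (deriv τ) ∧
        BoundedDerivs k (C * min 1 η) (max 1 η) (deriv τ - 1) := by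
  rcases k with _ | k
  · refine ⟨1 + c₀⁻¹, fun S => ⟨boundedDerivs_zero_iff.2 ⟨S.continuous_deriv, fun y => ?_⟩,
      boundedDerivs_zero_iff.2 ⟨S.continuous_deriv.sub continuous_const, S.abs_deriv_sub_one_le⟩⟩⟩
    linarith [S.abs_deriv_le y]
  obtain ⟨C, hC⟩ := exists_boundedDerivs_iteratedDeriv_comp_and_deriv (k + 1) c₀ k
  refine ⟨1 + c₀⁻¹ + 8 ^ k * C ^ 4, fun S => ?_⟩
  obtain ⟨hg, hτ⟩ := hC S
  have : 0 ≤ 8 ^ k * C ^ 4 := by positivity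
  exact ⟨S.boundedDerivs_deriv_succ le_rfl (hg 2 (by omega)) (hτ (by omega))
      (by linarith) (by linarith [inv_pos.2 S.c₀_pos]),
    S.boundedDerivs_deriv_sub_one_succ le_rfl (hg 2 (by omega)) (hτ (by omega))⟩

end IdAddInverse

/-- The coefficient `α_{l,r}`. Differentiating `φ⁽ʳ⁾ ∘ τ` gives `τ' · φ⁽ʳ⁺¹⁾ ∘ τ`; the last summand
accounts for the leading term `φ⁽ˡ⁾ ∘ τ`, which is kept outside the sum. -/
noncomputable def iteratedDerivCoeff (τ : ℝ → ℝ) : ℕ → ℕ → ℝ → ℝ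
  | 0, r => if r = 0 then deriv τ - 1 else 0
  | l + 1, 0 => deriv (iteratedDerivCoeff τ l 0)
  | l + 1, r + 1 => deriv (iteratedDerivCoeff τ l (r + 1)) + deriv τ * iteratedDerivCoeff τ l r +
      if r = l then deriv τ - 1 else 0

theorem iteratedDerivCoeff_of_lt (τ : ℝ → ℝ) {l r : ℕ} (hlr : l < r) :
    iteratedDerivCoeff τ l r = 0 := by
  induction l generalizing r with
  | zero => simp [iteratedDerivCoeff, hlr.ne']
  | succ l ih =>
    obtain ⟨r, rfl⟩ : ∃ r', r = r' + 1 := ⟨r - 1, by omega⟩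
    have hrl : r ≠ l := by omega
    simp [iteratedDerivCoeff, ih (by omega : l < r + 1), ih (by omega : l < r), hrl]

theorem BoundedDerivs.iteratedDerivCoeff_succ {τ : ℝ → ℝ} {n l : ℕ} {C B D M : ℝ}
    (hM : 0 ≤ M) (hτ : BoundedDerivs n C M (deriv τ)) (hτ1 : BoundedDerivs n B M (deriv τ - 1))
    (hc : ∀ r, BoundedDerivs (n + 1) D M (iteratedDerivCoeff τ l r)) (r : ℕ) :
    BoundedDerivs n (D * M + 2 ^ n * C * D + B) M (iteratedDerivCoeff τ (l + 1) r) := by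
  have hB := hτ1.nonneg
  have hD := (hc 0).nonneg
  have hC := hτ.nonneg
  rcases r with _ | r
  · have : 0 ≤ 2 ^ n * C * D := by positivity
    exact (boundedDerivs_succ_iff.1 (hc 0)).2.2.mono (by linarith) hM
  refine ((boundedDerivs_succ_iff.1 (hc (r + 1))).2.2.add
    (hτ.mul ((hc r).of_le n.le_succ) hM)).add ?_
  split_ifs
  exacts [hτ1, BoundedDerivs.zero_fun hB hM]

theorem boundedDerivs_iteratedDerivCoeff {τ : ℝ → ℝ} {k : ℕ} {C a M : ℝ} (ha : 0 ≤ a)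
    (hM : 1 ≤ M) (hτ : BoundedDerivs k C M (deriv τ))
    (hτ1 : BoundedDerivs k (C * a) M (deriv τ - 1)) (l : ℕ) (hl : l ≤ k) (r : ℕ) :
    BoundedDerivs (k - l) ((1 + 2 ^ k * C + C) ^ (l + 1) * a * M ^ l) M
      (iteratedDerivCoeff τ l r) := by
  have hC := hτ.nonneg
  induction l generalizing r with
  | zero =>
    simp only [iteratedDerivCoeff, zero_add, pow_one, pow_zero, mul_one]
    split_ifs
    · have : 0 ≤ 2 ^ k * C := by positivity
      exact hτ1.mono (by gcongr; linarith) (by positivity)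
    · exact BoundedDerivs.zero_fun (by positivity) (by positivity)
  | succ l ih =>
    have hkl : k - l = k - (l + 1) + 1 := by omega
    have hstep := (hτ.of_le (Nat.sub_le k (l + 1))).iteratedDerivCoeff_succ (by positivity)
      (hτ1.of_le (Nat.sub_le k (l + 1))) (fun r => hkl ▸ ih (by omega) r) r
    refine hstep.mono ?_ (by positivity)
    set C' := 1 + 2 ^ k * C + C
    have hC' : 1 ≤ C' := by
      have : 0 ≤ 2 ^ k * C := by positivity
      linarith
    have hDX : C' ^ (l + 1) * a * M ^ l ≤ C' ^ (l + 1) * a * M ^ (l + 1) := by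
      gcongr
      omega
    have haX : a ≤ C' ^ (l + 1) * a * M ^ (l + 1) := by
      calc a = 1 * a * 1 := by ring
        _ ≤ _ := by gcongr <;> exact one_le_pow₀ (by linarith)
    calc C' ^ (l + 1) * a * M ^ l * M + 2 ^ (k - (l + 1)) * C * (C' ^ (l + 1) * a * M ^ l) + C * a
        ≤ C' ^ (l + 1) * a * M ^ (l + 1) + 2 ^ k * C * (C' ^ (l + 1) * a * M ^ (l + 1)) +
            C * (C' ^ (l + 1) * a * M ^ (l + 1)) := by
          rw [mul_assoc, ← pow_succ]
          gcongr
          · norm_num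
          · omega
      _ = C' ^ (l + 1 + 1) * a * M ^ (l + 1) := by ring

theorem iteratedDeriv_comp_mul_deriv {τ φ : ℝ → ℝ} (hτ : Differentiable ℝ τ) {l : ℕ}
    (hc : ∀ i < l, ∀ r, Differentiable ℝ (iteratedDerivCoeff τ i r)) (hφ : ContDiff ℝ l φ)
    (y : ℝ) :
    iteratedDeriv l (fun x => φ (τ x) * deriv τ x) y =
      iteratedDeriv l φ (τ y) +
        ∑ r ∈ range (l + 1), iteratedDerivCoeff τ l r y * iteratedDeriv r φ (τ y) := by
  induction l generalizing y with
  | zero => simp [iteratedDerivCoeff]; ring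
  | succ l ih =>
    have hφd : ∀ r ≤ l, HasDerivAt (fun x => iteratedDeriv r φ (τ x))
        (iteratedDeriv (r + 1) φ (τ y) * deriv τ y) y := fun r hr => by
      rw [iteratedDeriv_succ]
      exact ((hφ.differentiable_iteratedDeriv r (by exact_mod_cast Nat.lt_succ_of_le hr))
        (τ y)).hasDerivAt.comp y (hτ y).hasDerivAt
    have hsum := HasDerivAt.fun_sum (u := range (l + 1)) fun r hr =>
      ((hc l (by omega) r) y).hasDerivAt.fun_mul (hφd r (Nat.lt_succ_iff.1 (mem_range.1 hr)))
    rw [iteratedDeriv_succ, funext (ih (fun i hi => hc i (by omega))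
      (hφ.of_le (by exact_mod_cast Nat.le_succ l))), ((hφd l le_rfl).fun_add hsum).deriv]
    have hlast : deriv (iteratedDerivCoeff τ l (l + 1)) y = 0 := by
      simp [iteratedDerivCoeff_of_lt τ (Nat.lt_succ_self l)]
    have hshift :
        ∑ r ∈ range (l + 1), deriv (iteratedDerivCoeff τ l r) y * iteratedDeriv r φ (τ y) =
          deriv (iteratedDerivCoeff τ l 0) y * iteratedDeriv 0 φ (τ y) +
          ∑ r ∈ range (l + 1),
            deriv (iteratedDerivCoeff τ l (r + 1)) y * iteratedDeriv (r + 1) φ (τ y) := by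
      have := sum_range_succ'
        (fun r => deriv (iteratedDerivCoeff τ l r) y * iteratedDeriv r φ (τ y)) (l + 1)
      rw [sum_range_succ, hlast, zero_mul, add_zero] at this
      rw [this, add_comm]
    rw [sum_range_succ' _ (l + 1)]
    simp only [iteratedDerivCoeff, Pi.add_apply, Pi.mul_apply, ite_apply, Pi.sub_apply,
      Pi.one_apply, Pi.zero_apply, add_mul, ite_mul, zero_mul, sum_add_distrib, sum_ite_eq',
      mem_range, Nat.lt_succ_self, if_true]
    have hswap : ∑ r ∈ range (l + 1),
        iteratedDerivCoeff τ l r y * (iteratedDeriv (r + 1) φ (τ y) * deriv τ y) =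
        ∑ r ∈ range (l + 1),
          deriv τ y * iteratedDerivCoeff τ l r y * iteratedDeriv (r + 1) φ (τ y) :=
      sum_congr rfl fun r _ => by ring
    rw [hshift, hswap]
    ring

theorem min_one_mul_max_one_pow_le {η : ℝ} (hη : 0 ≤ η) (k : ℕ) :
    min 1 η * max 1 η ^ k ≤ η + η ^ k := by
  rcases le_total η 1 with h | h
  · simp [min_eq_right h, max_eq_left h, pow_nonneg hη]
  · simp [min_eq_left h, max_eq_right h, hη]

theorem sum_abs_iteratedDerivCoeff_le {τ : ℝ → ℝ} {k l : ℕ} {C η : ℝ} (hη : 0 ≤ η)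
    (hτ : BoundedDerivs k C (max 1 η) (deriv τ))
    (hτ1 : BoundedDerivs k (C * min 1 η) (max 1 η) (deriv τ - 1)) (hl : l ≤ k) (y : ℝ) :
    ∑ r ∈ range (l + 1), |iteratedDerivCoeff τ l r y| ≤
      (k + 1) * (1 + 2 ^ k * C + C) ^ (k + 1) * (η + η ^ k) := by
  have hC' : 1 ≤ 1 + 2 ^ k * C + C := by
    have := hτ.nonneg
    have : 0 ≤ 2 ^ k * C := by positivity
    linarith
  have hM : 1 ≤ max 1 η := le_max_left _ _
  have hε : 0 ≤ min 1 η := le_min zero_le_one hη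
  calc ∑ r ∈ range (l + 1), |iteratedDerivCoeff τ l r y|
      ≤ ∑ r ∈ range (l + 1), (1 + 2 ^ k * C + C) ^ (l + 1) * min 1 η * max 1 η ^ l :=
        sum_le_sum fun r _ => (boundedDerivs_iteratedDerivCoeff hε hM hτ hτ1 l hl r).abs_le y
    _ ≤ (k + 1) * ((1 + 2 ^ k * C + C) ^ (k + 1) * (min 1 η * max 1 η ^ k)) := by
        rw [sum_const, card_range, nsmul_eq_mul, mul_assoc _ (min 1 η)]
        gcongr
        exact_mod_cast Nat.succ_le_succ hl
    _ ≤ (k + 1) * (1 + 2 ^ k * C + C) ^ (k + 1) * (η + η ^ k) := by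
        rw [mul_assoc]
        gcongr
        exact min_one_mul_max_one_pow_le hη k

theorem stmt_3_general (k : ℕ) (c₀ : ℝ) (hc₀ : 0 < c₀) :
    ∃ K : ℝ, ∀ (η : ℝ), 0 ≤ η → ∀ (h τ : ℝ → ℝ),
      ContDiff ℝ (k + 1) h →
      (∀ l ≤ k + 1, ∀ y : ℝ, |iteratedDeriv l h y| ≤ η) →
      (∀ y : ℝ, c₀ ≤ 1 + deriv h y) →
      (∀ y : ℝ, τ y + h (τ y) = y) →
      ∃ α : ℕ → ℕ → ℝ → ℝ,
        (∀ l ≤ k, ∀ φ : ℝ → ℝ, ContDiff ℝ l φ → ∀ y : ℝ,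
            iteratedDeriv l (fun x => φ (τ x) * deriv τ x) y =
              iteratedDeriv l φ (τ y) +
                ∑ r ∈ Finset.range (l + 1), α l r y * iteratedDeriv r φ (τ y)) ∧
        (∀ l ≤ k, ∀ y : ℝ,
            (1 + 1 / deriv τ y) * ∑ r ∈ Finset.range (l + 1), |α l r y|
              ≤ K * (1 + η) * (η + η ^ k)) := by
  obtain ⟨C, hC⟩ := IdAddInverse.exists_boundedDerivs_deriv k c₀
  refine ⟨2 * (k + 1) * (1 + 2 ^ k * C + C) ^ (k + 1), fun η hη h τ hh hbd hlow hinv => ?_⟩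
  have S : IdAddInverse k c₀ η h τ := ⟨hc₀, hh, hbd, hlow, hinv⟩
  obtain ⟨hτ, hτ1⟩ := hC S
  refine ⟨iteratedDerivCoeff τ, fun l hl φ hφ y => ?_, fun l hl y => ?_⟩
  · refine iteratedDeriv_comp_mul_deriv S.differentiable (fun i hi r => ?_) hφ y
    exact (boundedDerivs_iteratedDerivCoeff (le_min zero_le_one hη) (le_max_left 1 η) hτ hτ1 i
      (by omega) r).1.differentiable (by exact_mod_cast (by omega : k - i ≠ 0))
  · calc (1 + 1 / deriv τ y) * ∑ r ∈ range (l + 1), |iteratedDerivCoeff τ l r y|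
        ≤ 2 * (1 + η) * ((k + 1) * (1 + 2 ^ k * C + C) ^ (k + 1) * (η + η ^ k)) :=
          mul_le_mul (S.one_add_one_div_deriv_le y) (sum_abs_iteratedDerivCoeff_le hη hτ hτ1 hl y)
            (sum_nonneg fun _ _ => abs_nonneg _) (by positivity)
      _ = 2 * (k + 1) * (1 + 2 ^ k * C + C) ^ (k + 1) * (1 + η) * (η + η ^ k) := by ring

/-- Formulae (cuh3)-(cuh4): there are a constant `K = K(k, c₀)` and functions `α_{l,r}`
such that `[φ(τ(y))τ'(y)]^{(l)} = φ^{(l)}(τ(y)) + Σ_{r=0}^{l} α_{l,r}(y) φ^{(r)}(τ(y))`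
and `(1 + 1/τ'(y)) Σ_{r=0}^{l} |α_{l,r}(y)| ≤ K(1+η)(η+η^k)` for `0 ≤ l ≤ k`. -/
theorem stmt_3 (k : ℕ) (hk : 1 ≤ k) (c₀ : ℝ) (hc₀ : 0 < c₀) :
    ∃ K : ℝ, ∀ (η : ℝ), 0 ≤ η → ∀ (h τ : ℝ → ℝ),
      ContDiff ℝ (k + 1) h →
      (∀ l ≤ k + 1, ∀ y : ℝ, |iteratedDeriv l h y| ≤ η) →
      (∀ y : ℝ, c₀ ≤ 1 + deriv h y) →
      (∀ y : ℝ, τ y + h (τ y) = y) →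
      ∃ α : ℕ → ℕ → ℝ → ℝ,
        (∀ l ≤ k, ∀ φ : ℝ → ℝ, ContDiff ℝ l φ → ∀ y : ℝ,
            iteratedDeriv l (fun x => φ (τ x) * deriv τ x) y =
              iteratedDeriv l φ (τ y) +
                ∑ r ∈ Finset.range (l + 1), α l r y * iteratedDeriv r φ (τ y)) ∧
        (∀ l ≤ k, ∀ y : ℝ,
            (1 + 1 / deriv τ y) * ∑ r ∈ Finset.range (l + 1), |α l r y|
              ≤ K * (1 + η) * (η + η ^ k)) :=
  stmt_3_general k c₀ hc₀
end

section
/- Let (G,𝒢,q) be a σ-finite measure space and G_i ∈ 𝒢 with q(G_i) < ∞. Let b, γ : ℝ → ℝ be bounded measurable with γ ≥ 0, h : ℝ × G → ℝ measurable, and i ≥ 1 an integer. Define, for bounded measurable φ : ℝ → ℝ, L^i φ(y) = i[φ(y + b(y)/i) − φ(y)] + γ(y)∫_{G_i} [φ(y + h(y,z)) − φ(y)] q(dz). Let f_i be a probability measure on ℝ. Then there is at most one family (f_i(t, dy))_{t ≥ 0} of finite signed measures on ℝ such that t ↦ f_i(t, A) is measurable for each Borel A, sup_{t ∈ [0,T]}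 ‖f_i(t)‖_{TV} < ∞ for all T > 0, and for all bounded measurable φ and all t ≥ 0: ∫_ℝ φ(y) f_i(t, dy) = ∫_ℝ φ(y) f_i(dy) + ∫_0^t ∫_ℝ L^i φ(y) f_i(s, dy) ds. -/
/-!
The difference `D(t) = f(t) - g(t)` satisfies `D(t)(A) = ∫₀ᵗ ∫ L^i 1_A dD(s) ds`. Since
`‖L^i 1_A‖_∞ ≤ K := 2i + 2‖γ‖_∞ q(G_i)` and `‖D(s)‖_TV ≤ 2 sup_A |D(s)(A)|`, the quantity
`e(t) = sup_A |D(t)(A)|` satisfies `e(t) ≤ 2K ∫₀ᵗ e(s) ds`, and it is bounded on `[0, T]` by the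
total-variation bounds, say by `B`. Iterating gives `e(t) ≤ B (2Kt)ⁿ / n!` for all `n`, so `e = 0`.
-/

open MeasureTheory
open scoped ENNReal

/-- Integral of a function against a finite signed measure, via the Jordan decomposition. -/
noncomputable def signedIntegral (φ : ℝ → ℝ) (s : SignedMeasure ℝ) : ℝ :=
  (∫ y, φ y ∂s.toJordanDecomposition.posPart) - ∫ y, φ y ∂s.toJordanDecomposition.negPart

/-- The approximate generator
`L^i φ(y) = i[φ(y + b(y)/i) − φ(y)] + γ(y)∫_{G_i}[φ(y + h(y,z)) − φ(y)] q(dz)`. -/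
noncomputable def LiOp {G : Type*} [MeasurableSpace G] (q : Measure G) (Gi : Set G)
    (b γ : ℝ → ℝ) (h : ℝ → G → ℝ) (i : ℕ) (φ : ℝ → ℝ) : ℝ → ℝ := fun y =>
  (i : ℝ) * (φ (y + b y / i) - φ y) + γ y * ∫ z in Gi, (φ (y + h y z) - φ y) ∂q

/-- The family `(f(t,dy))_{t ≥ 0}` of finite signed measures is a solution of the weak
Fokker–Planck equation (eql) for `L^i`, with initial condition the probability
measure `f₀`: measurability in `t`, local boundedness in total variation, and
`∫ φ df(t) = ∫ φ df₀ + ∫_0^t ∫ L^i φ df(s) ds` for all bounded measurable `φ`. -/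
def IsWeakSol {G : Type*} [MeasurableSpace G] (q : Measure G) (Gi : Set G)
    (b γ : ℝ → ℝ) (h : ℝ → G → ℝ) (i : ℕ) (f₀ : Measure ℝ)
    (f : ℝ → SignedMeasure ℝ) : Prop :=
  (∀ A : Set ℝ, MeasurableSet A → Measurable fun t => f t A) ∧
  (∀ T : ℝ, 0 < T → ∃ C : ℝ≥0∞, C < ⊤ ∧
      ∀ t ∈ Set.Icc (0 : ℝ) T, (f t).totalVariation Set.univ ≤ C) ∧
  (∀ φ : ℝ → ℝ, Measurable φ → (∃ M : ℝ, ∀ y : ℝ, |φ y| ≤ M) →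
      ∀ t : ℝ, 0 ≤ t →
        signedIntegral φ (f t)
          = (∫ y, φ y ∂f₀)
            + ∫ s in (0:ℝ)..t, signedIntegral (LiOp q Gi b γ h i φ) (f s))

open Set Filter Topology

namespace MeasureTheory.SignedMeasure

variable {α : Type*} [MeasurableSpace α]

lemma totalVariation_toReal_eq (s : SignedMeasure α) :
    (s.totalVariation univ).toReal =
      s.toJordanDecomposition.posPart.real univ + s.toJordanDecomposition.negPart.real univ := by
  rw [totalVariation, ← measureReal_def, measureReal_add_apply]

lemma abs_apply_le_totalVariation (s : SignedMeasure α) (A : Set α) :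
    |s A| ≤ (s.totalVariation univ).toReal := by
  by_cases hA : MeasurableSet A
  · rw [s.apply_eq_posPart_real_sub_negPart_real hA, totalVariation_toReal_eq, abs_sub_le_iff]
    have hp := measureReal_mono (μ := s.toJordanDecomposition.posPart) (subset_univ A)
    have hn := measureReal_mono (μ := s.toJordanDecomposition.negPart) (subset_univ A)
    constructor <;> linarith [measureReal_nonneg (μ := s.toJordanDecomposition.posPart) (s := A),
      measureReal_nonneg (μ := s.toJordanDecomposition.negPart) (s := A)]
  · rw [s.not_measurable hA, abs_zero]
    exact ENNReal.toReal_nonneg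

lemma totalVariation_toReal_le_of_abs_apply_le (s : SignedMeasure α) {c : ℝ}
    (h : ∀ A, MeasurableSet A → |s A| ≤ c) : (s.totalVariation univ).toReal ≤ 2 * c := by
  -- `u` is a Hahn set: the positive part lives on `uᶜ`, the negative part on `u`.
  obtain ⟨u, hu, hpos, hneg⟩ := s.toJordanDecomposition.mutuallySingular
  have hpos' : s.toJordanDecomposition.posPart.real univ = s uᶜ := by
    rw [s.apply_eq_posPart_real_sub_negPart_real hu.compl, ← measureReal_add_measureReal_compl hu]
    simp [measureReal_def, hpos, hneg]
  have hneg' : s.toJordanDecomposition.negPart.real univ = -s u := by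
    rw [s.apply_eq_posPart_real_sub_negPart_real hu, ← measureReal_add_measureReal_compl hu]
    simp [measureReal_def, hpos, hneg]
  rw [totalVariation_toReal_eq, hpos', hneg']
  linarith [abs_le.mp (h u hu), abs_le.mp (h uᶜ hu.compl)]

end MeasureTheory.SignedMeasure

lemma integrable_of_abs_le {α : Type*} [MeasurableSpace α] {ψ : α → ℝ} (hψm : Measurable ψ)
    {M : ℝ} (hψ : ∀ y, |ψ y| ≤ M) (μ : Measure α) [IsFiniteMeasure μ] : Integrable ψ μ :=
  .of_bound hψm.aestronglyMeasurable M (.of_forall hψ)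

lemma signedIntegral_indicator_const (s : SignedMeasure ℝ) {A : Set ℝ} (hA : MeasurableSet A)
    (c : ℝ) : signedIntegral (A.indicator fun _ => c) s = c * s A := by
  rw [signedIntegral, integral_indicator_const c hA, integral_indicator_const c hA,
    s.apply_eq_posPart_real_sub_negPart_real hA, smul_eq_mul, smul_eq_mul]
  ring

lemma abs_signedIntegral_le (s : SignedMeasure ℝ) {ψ : ℝ → ℝ} {M : ℝ} (hψ : ∀ y, |ψ y| ≤ M) :
    |signedIntegral ψ s| ≤ M * (s.totalVariation univ).toReal := by
  have hψ' : ∀ y, ‖ψ y‖ ≤ M := hψ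
  have hp := norm_integral_le_of_norm_le_const (μ := s.toJordanDecomposition.posPart)
    (.of_forall hψ')
  have hn := norm_integral_le_of_norm_le_const (μ := s.toJordanDecomposition.negPart)
    (.of_forall hψ')
  rw [Real.norm_eq_abs] at hp hn
  rw [s.totalVariation_toReal_eq, mul_add]
  exact (abs_sub _ _).trans (add_le_add hp hn)

lemma signedIntegral_eq_integral_sub_integral {s : SignedMeasure ℝ} {μ ν : Measure ℝ}
    [IsFiniteMeasure μ] [IsFiniteMeasure ν] (hs : s = μ.toSignedMeasure - ν.toSignedMeasure)
    {ψ : ℝ → ℝ} (hψm : Measurable ψ) {M : ℝ} (hψ : ∀ y, |ψ y| ≤ M) :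
    signedIntegral ψ s = (∫ y, ψ y ∂μ) - ∫ y, ψ y ∂ν := by
  set P := s.toJordanDecomposition.posPart
  set N := s.toJordanDecomposition.negPart
  have hmeas : P + ν = μ + N := by
    ext A hA
    have hA' := congrArg (· A) hs
    simp only [sub_apply, Measure.toSignedMeasure_apply_measurable hA,
      s.apply_eq_posPart_real_sub_negPart_real hA] at hA'
    rw [← ENNReal.toReal_eq_toReal_iff' (by finiteness) (by finiteness), Measure.add_apply,
      Measure.add_apply, ENNReal.toReal_add (by finiteness) (by finiteness),
      ENNReal.toReal_add (by finiteness) (by finiteness)]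
    simp only [measureReal_def] at hA'
    linarith
  have hint := congrArg (fun m => ∫ y, ψ y ∂m) hmeas
  rw [integral_add_measure (integrable_of_abs_le hψm hψ _) (integrable_of_abs_le hψm hψ _),
    integral_add_measure (integrable_of_abs_le hψm hψ _) (integrable_of_abs_le hψm hψ _)] at hint
  rw [signedIntegral]
  linarith

lemma signedIntegral_sub (s₁ s₂ : SignedMeasure ℝ) {ψ : ℝ → ℝ} (hψm : Measurable ψ) {M : ℝ}
    (hψ : ∀ y, |ψ y| ≤ M) :
    signedIntegral ψ (s₁ - s₂) = signedIntegral ψ s₁ - signedIntegral ψ s₂ := by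
  set p₁ := s₁.toJordanDecomposition.posPart
  set n₁ := s₁.toJordanDecomposition.negPart
  set p₂ := s₂.toJordanDecomposition.posPart
  set n₂ := s₂.toJordanDecomposition.negPart
  have hs : s₁ - s₂ = (p₁ + n₂).toSignedMeasure - (n₁ + p₂).toSignedMeasure := by
    conv_lhs => rw [← s₁.toSignedMeasure_toJordanDecomposition,
      ← s₂.toSignedMeasure_toJordanDecomposition]
    simp only [JordanDecomposition.toSignedMeasure, Measure.toSignedMeasure_add]
    abel
  rw [signedIntegral_eq_integral_sub_integral hs hψm hψ, signedIntegral, signedIntegral,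
    integral_add_measure (integrable_of_abs_le hψm hψ _) (integrable_of_abs_le hψm hψ _),
    integral_add_measure (integrable_of_abs_le hψm hψ _) (integrable_of_abs_le hψm hψ _)]
  ring

lemma signedIntegral_simpleFunc_add (s : SignedMeasure ℝ) (g₁ g₂ : SimpleFunc ℝ ℝ) :
    signedIntegral ⇑(g₁ + g₂) s = signedIntegral g₁ s + signedIntegral g₂ s := by
  simp only [signedIntegral, SimpleFunc.coe_add, Pi.add_apply]
  rw [integral_add g₁.integrable_of_isFiniteMeasure g₂.integrable_of_isFiniteMeasure,
    integral_add g₁.integrable_of_isFiniteMeasure g₂.integrable_of_isFiniteMeasure]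
  ring

lemma tendsto_signedIntegral_of_tendsto (s : SignedMeasure ℝ) {ψ : ℕ → ℝ → ℝ} {φ : ℝ → ℝ}
    (hψm : ∀ n, Measurable (ψ n)) {M : ℝ} (hψ : ∀ n y, |ψ n y| ≤ M)
    (hlim : ∀ y, Tendsto (fun n => ψ n y) atTop (𝓝 (φ y))) :
    Tendsto (fun n => signedIntegral (ψ n) s) atTop (𝓝 (signedIntegral φ s)) := by
  have dominated (μ : Measure ℝ) [IsFiniteMeasure μ] :
      Tendsto (fun n => ∫ y, ψ n y ∂μ) atTop (𝓝 (∫ y, φ y ∂μ)) :=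
    tendsto_integral_of_dominated_convergence (fun _ => M)
      (fun n => (hψm n).aestronglyMeasurable) (integrable_const M)
      (fun n => .of_forall (hψ n)) (.of_forall hlim)
  exact (dominated _).sub (dominated _)

lemma measurable_signedIntegral {β : Type*} [MeasurableSpace β] {f : β → SignedMeasure ℝ}
    (hf : ∀ A, MeasurableSet A → Measurable fun t => f t A) {ψ : ℝ → ℝ} (hψm : Measurable ψ)
    {M : ℝ} (hψ : ∀ y, |ψ y| ≤ M) : Measurable fun t => signedIntegral ψ (f t) := by
  have simple (g : SimpleFunc ℝ ℝ) : Measurable fun t => signedIntegral g (f t) := by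
    induction g using SimpleFunc.induction with
    | @const c A hA =>
      have hcoe : ⇑(SimpleFunc.piecewise A hA (.const ℝ c) (.const ℝ 0))
          = A.indicator fun _ => c := by
        ext y
        by_cases hy : y ∈ A <;> simp [hy]
      simp only [hcoe, signedIntegral_indicator_const _ hA]
      exact (hf A hA).const_mul c
    | @add g₁ g₂ _ hg₁ hg₂ =>
      simp only [signedIntegral_simpleFunc_add]
      exact hg₁.add hg₂
  set approx := fun n => SimpleFunc.approxOn ψ hψm univ 0 (mem_univ 0) n
  have approx_le (n : ℕ) (y : ℝ) : |approx n y| ≤ M + M := by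
    have := SimpleFunc.norm_approxOn_zero_le hψm (mem_univ 0) y n
    simp only [Real.norm_eq_abs] at this
    linarith [hψ y]
  refine measurable_of_tendsto_metrizable (fun n => simple (approx n)) (tendsto_pi_nhds.2 ?_)
  exact fun t => tendsto_signedIntegral_of_tendsto (f t) (fun n => (approx n).measurable)
    approx_le fun y => SimpleFunc.tendsto_approxOn hψm (mem_univ 0) (subset_closure (mem_univ _))

section Generator

variable {G : Type*} [MeasurableSpace G] {q : Measure G} {Gi : Set G} {b γ : ℝ → ℝ}
  {h : ℝ → G → ℝ}

lemma measurable_LiOp (hGifin : q Gi < ⊤) (hbmeas : Measurable b) (hγmeas : Measurable γ)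
    (hhmeas : Measurable (Function.uncurry h)) (i : ℕ) {φ : ℝ → ℝ} (hφm : Measurable φ) :
    Measurable (LiOp q Gi b γ h i φ) := by
  have : IsFiniteMeasure (q.restrict Gi) := isFiniteMeasure_restrict.2 hGifin.ne
  have hjump : StronglyMeasurable fun p : ℝ × G => φ (p.1 + h p.1 p.2) - φ p.1 :=
    ((hφm.comp (measurable_fst.add hhmeas)).sub (hφm.comp measurable_fst)).stronglyMeasurable
  exact (measurable_const.mul ((hφm.comp (measurable_id.add (hbmeas.div_const _))).sub hφm)).add
    (hγmeas.mul hjump.integral_prod_right'.measurable)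

lemma abs_LiOp_le (hGifin : q Gi < ⊤) {Mγ : ℝ} (hγ : ∀ y, |γ y| ≤ Mγ) (i : ℕ) {φ : ℝ → ℝ}
    {M : ℝ} (hφ : ∀ y, |φ y| ≤ M) (y : ℝ) :
    |LiOp q Gi b γ h i φ y| ≤ (2 * i + 2 * Mγ * (q Gi).toReal) * M := by
  have : IsFiniteMeasure (q.restrict Gi) := isFiniteMeasure_restrict.2 hGifin.ne
  have hMγ : 0 ≤ Mγ := (abs_nonneg _).trans (hγ 0)
  have hdiff (x : ℝ) : |φ x - φ y| ≤ 2 * M := by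
    linarith [abs_sub (φ x) (φ y), hφ x, hφ y]
  have hjump : |∫ z in Gi, (φ (y + h y z) - φ y) ∂q| ≤ 2 * M * (q Gi).toReal := by
    have := norm_integral_le_of_norm_le_const (μ := q.restrict Gi)
      (f := fun z => φ (y + h y z) - φ y) (.of_forall fun z => hdiff (y + h y z))
    rwa [measureReal_restrict_apply_univ, measureReal_def] at this
  calc |LiOp q Gi b γ h i φ y|
      ≤ |(i : ℝ) * (φ (y + b y / i) - φ y)|
        + |γ y * ∫ z in Gi, (φ (y + h y z) - φ y) ∂q| := abs_add_le _ _
    _ ≤ i * (2 * M) + Mγ * (2 * M * (q Gi).toReal) := by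
      rw [abs_mul, abs_mul, Nat.abs_cast]
      exact add_le_add (mul_le_mul_of_nonneg_left (hdiff _) i.cast_nonneg)
        (mul_le_mul (hγ y) hjump (abs_nonneg _) hMγ)
    _ = (2 * i + 2 * Mγ * (q Gi).toReal) * M := by ring

end Generator

/-- Picard iteration: the hypotheses give `|u t a| ≤ B (K t)ⁿ / n!` for every `n`. -/
theorem eq_zero_of_abs_le_mul_integral {ι : Type*} {u : ℝ → ι → ℝ} {T B K : ℝ}
    (hB : ∀ t ∈ Icc 0 T, ∀ a, |u t a| ≤ B)
    (hstep : ∀ ρ : ℝ → ℝ, Continuous ρ → ∀ t ∈ Icc 0 T,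
      (∀ s ∈ Icc 0 t, ∀ a, |u s a| ≤ ρ s) → ∀ a, |u t a| ≤ K * ∫ s in 0..t, ρ s) :
    ∀ t ∈ Icc 0 T, ∀ a, u t a = 0 := by
  have iterate (n : ℕ) : ∀ t ∈ Icc 0 T, ∀ a, |u t a| ≤ B * (K * t) ^ n / n.factorial := by
    induction n with
    | zero => simpa using hB
    | succ n ih =>
      intro t ht a
      have hint : K * ∫ s in 0..t, B * (K * s) ^ n / n.factorial
          = B * (K * t) ^ (n + 1) / (n + 1).factorial := by
        simp only [mul_pow, div_eq_mul_inv, intervalIntegral.integral_mul_const,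
          intervalIntegral.integral_const_mul, integral_pow, Nat.factorial_succ]
        push_cast
        field_simp
        ring
      rw [← hint]
      exact hstep _ (by fun_prop) t ht
        (fun s hs => ih s ⟨hs.1, hs.2.trans ht.2⟩) a
  intro t ht a
  have hlim : Tendsto (fun n : ℕ => B * (K * t) ^ n / n.factorial) atTop (𝓝 0) := by
    simpa [mul_div_assoc] using (FloorSemiring.tendsto_pow_div_factorial_atTop (K * t)).const_mul B
  exact abs_nonpos_iff.mp (ge_of_tendsto' hlim fun n => iterate n t ht a)

namespace IsWeakSol

variable {G : Type*} [MeasurableSpace G] {q : Measure G} {Gi : Set G} {b γ : ℝ → ℝ}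
  {h : ℝ → G → ℝ} {i : ℕ} {f₀ : Measure ℝ} {f g : ℝ → SignedMeasure ℝ}

lemma exists_abs_apply_le (hf : IsWeakSol q Gi b γ h i f₀ f) (T : ℝ) :
    ∃ C, ∀ t ∈ Icc 0 T, ∀ A, |f t A| ≤ C := by
  obtain ⟨C, hC, hfC⟩ := hf.2.1 (max T 1) (by positivity)
  refine ⟨C.toReal, fun t ht A => (f t).abs_apply_le_totalVariation A |>.trans ?_⟩
  exact ENNReal.toReal_mono hC.ne (hfC t ⟨ht.1, ht.2.trans (le_max_left _ _)⟩)

lemma intervalIntegrable_signedIntegral (hf : IsWeakSol q Gi b γ h i f₀ f) {ψ : ℝ → ℝ}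
    (hψm : Measurable ψ) {M : ℝ} (hψ : ∀ y, |ψ y| ≤ M) {t : ℝ} (ht : 0 ≤ t) :
    IntervalIntegrable (fun s => signedIntegral ψ (f s)) volume 0 t := by
  obtain ⟨C, hC, hfC⟩ := hf.2.1 (t + 1) (by linarith)
  refine (intervalIntegrable_const (μ := volume) (c := M * C.toReal)).mono_fun'
    (measurable_signedIntegral hf.1 hψm hψ).aestronglyMeasurable ?_
  rw [uIoc_of_le ht, EventuallyLE, ae_restrict_iff' measurableSet_Ioc]
  refine .of_forall fun s hs => (abs_signedIntegral_le (f s) hψ).trans ?_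
  have hM : 0 ≤ M := (abs_nonneg _).trans (hψ 0)
  exact mul_le_mul_of_nonneg_left
    (ENNReal.toReal_mono hC.ne (hfC s ⟨hs.1.le, by linarith [hs.2]⟩)) hM

lemma signedIntegral_sub_eq_integral (hf : IsWeakSol q Gi b γ h i f₀ f)
    (hg : IsWeakSol q Gi b γ h i f₀ g) {φ : ℝ → ℝ} (hφm : Measurable φ) {Mφ : ℝ}
    (hφ : ∀ y, |φ y| ≤ Mφ) (hLm : Measurable (LiOp q Gi b γ h i φ)) {M : ℝ}
    (hL : ∀ y, |LiOp q Gi b γ h i φ y| ≤ M) {t : ℝ} (ht : 0 ≤ t) :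
    signedIntegral φ (f t - g t)
      = ∫ s in 0..t, signedIntegral (LiOp q Gi b γ h i φ) (f s - g s) := by
  simp only [signedIntegral_sub _ _ hφm hφ, signedIntegral_sub _ _ hLm hL,
    hf.2.2 φ hφm ⟨Mφ, hφ⟩ t ht, hg.2.2 φ hφm ⟨Mφ, hφ⟩ t ht]
  rw [intervalIntegral.integral_sub (hf.intervalIntegrable_signedIntegral hLm hL ht)
    (hg.intervalIntegrable_signedIntegral hLm hL ht)]
  ring

lemma abs_sub_apply_le_integral (hf : IsWeakSol q Gi b γ h i f₀ f)
    (hg : IsWeakSol q Gi b γ h i f₀ g) (hGifin : q Gi < ⊤) (hbmeas : Measurable b)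
    (hγmeas : Measurable γ) {Mγ : ℝ} (hγ : ∀ y, |γ y| ≤ Mγ)
    (hhmeas : Measurable (Function.uncurry h)) {ρ : ℝ → ℝ} (hρ : Continuous ρ) {t : ℝ}
    (ht : 0 ≤ t) (hfg : ∀ s ∈ Icc 0 t, ∀ A, MeasurableSet A → |(f s - g s) A| ≤ ρ s)
    {A : Set ℝ} (hA : MeasurableSet A) :
    |(f t - g t) A| ≤ 2 * (2 * i + 2 * Mγ * (q Gi).toReal) * ∫ s in 0..t, ρ s := by
  set K := 2 * i + 2 * Mγ * (q Gi).toReal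
  set φ : ℝ → ℝ := A.indicator fun _ => 1
  have hφm : Measurable φ := measurable_const.indicator hA
  have hφ (y : ℝ) : |φ y| ≤ 1 := by
    by_cases hy : y ∈ A <;> simp [φ, hy]
  have hLm := measurable_LiOp hGifin hbmeas hγmeas hhmeas i hφm
  have hL := abs_LiOp_le (h := h) (b := b) hGifin hγ i hφ
  simp only [mul_one] at hL
  have hK : 0 ≤ K := (abs_nonneg _).trans (hL 0)
  have hbound : ∀ s ∈ Ioc 0 t,
      ‖signedIntegral (LiOp q Gi b γ h i φ) (f s - g s)‖ ≤ K * (2 * ρ s) := fun s hs =>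
    (abs_signedIntegral_le _ hL).trans (mul_le_mul_of_nonneg_left
      ((f s - g s).totalVariation_toReal_le_of_abs_apply_le (hfg s ⟨hs.1.le, hs.2⟩)) hK)
  calc |(f t - g t) A|
      = ‖∫ s in 0..t, signedIntegral (LiOp q Gi b γ h i φ) (f s - g s)‖ := by
        rw [← hf.signedIntegral_sub_eq_integral hg hφm hφ hLm hL ht,
          signedIntegral_indicator_const _ hA, one_mul, Real.norm_eq_abs]
    _ ≤ ∫ s in 0..t, K * (2 * ρ s) :=
        intervalIntegral.norm_integral_le_of_norm_le ht (.of_forall hbound)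
          ((hρ.const_mul 2).const_mul K |>.intervalIntegrable _ _)
    _ = 2 * K * ∫ s in 0..t, ρ s := by
        rw [intervalIntegral.integral_const_mul, intervalIntegral.integral_const_mul]
        ring

end IsWeakSol

theorem stmt_6_general {G : Type*} [MeasurableSpace G]
    (q : Measure G)
    (Gi : Set G) (hGifin : q Gi < ⊤)
    (b γ : ℝ → ℝ) (hbmeas : Measurable b)
    (hγmeas : Measurable γ) (hγbd : ∃ M : ℝ, ∀ y : ℝ, |γ y| ≤ M)
    (h : ℝ → G → ℝ) (hhmeas : Measurable (Function.uncurry h))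
    (i : ℕ)
    (f₀ : Measure ℝ)
    (f g : ℝ → SignedMeasure ℝ)
    (hf : IsWeakSol q Gi b γ h i f₀ f) (hg : IsWeakSol q Gi b γ h i f₀ g) :
    ∀ t : ℝ, 0 ≤ t → f t = g t := by
  intro T hT
  obtain ⟨Mγ, hγ⟩ := hγbd
  obtain ⟨Cf, hCf⟩ := hf.exists_abs_apply_le T
  obtain ⟨Cg, hCg⟩ := hg.exists_abs_apply_le T
  have hzero := eq_zero_of_abs_le_mul_integral
    (u := fun t (A : {A : Set ℝ // MeasurableSet A}) => (f t - g t) A) (B := Cf + Cg)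
    (fun t ht A => (abs_sub _ _).trans (add_le_add (hCf t ht A) (hCg t ht A)))
    (fun ρ hρ t ht hfg A => hf.abs_sub_apply_le_integral hg hGifin hbmeas hγmeas hγ hhmeas hρ
      ht.1 (fun s hs A hA => hfg s hs ⟨A, hA⟩) A.2)
  ext A hA
  exact sub_eq_zero.mp (hzero T ⟨hT, le_rfl⟩ ⟨A, hA⟩)

/-- Uniqueness part of Lemma cestparti-(i): for `q(G_i) < ∞`, `b, γ` bounded measurable
with `γ ≥ 0`, `h` measurable and `i ≥ 1`, there is at most one family of finite signed
measures solving the weak equation (eql) with initial condition `f₀`. -/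
theorem stmt_6 {G : Type*} [MeasurableSpace G]
    (q : Measure G) [SigmaFinite q]
    (Gi : Set G) (hGimeas : MeasurableSet Gi) (hGifin : q Gi < ⊤)
    (b γ : ℝ → ℝ) (hbmeas : Measurable b) (hbbd : ∃ M : ℝ, ∀ y : ℝ, |b y| ≤ M)
    (hγmeas : Measurable γ) (hγbd : ∃ M : ℝ, ∀ y : ℝ, |γ y| ≤ M)
    (hγpos : ∀ y : ℝ, 0 ≤ γ y)
    (h : ℝ → G → ℝ) (hhmeas : Measurable (Function.uncurry h))
    (i : ℕ) (hi : 1 ≤ i)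
    (f₀ : Measure ℝ) [IsProbabilityMeasure f₀]
    (f g : ℝ → SignedMeasure ℝ)
    (hf : IsWeakSol q Gi b γ h i f₀ f) (hg : IsWeakSol q Gi b γ h i f₀ g) :
    ∀ t : ℝ, 0 ≤ t → f t = g t :=
  stmt_6_general q Gi hGifin b γ hbmeas hγmeas hγbd h hhmeas i f₀ f g hf hg
end

section
/- Let k ≥ 1 be an integer, d > 0, δ > 1, Γ > 0. Let γ : ℝ → (0, Γ] and let g : ℝ × (0,∞) → ℝ be measurable with 0 < |g(y,z)| ≤ e^{−d z^δ} for all y ∈ ℝ, z > 0. Then for every θ > 0, every p ≥ 0 and every constant C > 0 there exist an integer n ≥ 1 and y ∈ ℝ such that (γ(y)/n) ∫_0^{n/γ(y)} |g(y,z)|^{−2k} dz > C(1 + |y|^p) e^{θn}. In fact, for every fixed y ∈ ℝ the left-hand side grows faster in n than any exponential e^{θn}. -/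
/-!
On `(T/2, T]` the bound `|g(y,z)| ≤ e^{-d z^δ}` gives `|g(y,z)|^{-2k} ≥ e^{2kd (T/2)^δ}`, so with
`T = n/γ(y)` the average `(γ(y)/n) ∫_0^{n/γ(y)} |g(y,z)|^{-2k} dz` is at least
`½ e^{c n^δ}` with `c = 2kd/(2γ(y))^δ > 0`. Since `δ > 1`, `c n^δ - θ n → ∞`, so the average
outgrows every `e^{θn}`; the first claim is the second one at `y = 0`.
-/

open MeasureTheory Filter
open scoped ENNReal
open Real Set

lemma Real.exp_nat_mul_le_inv_pow {a t : ℝ} (ha : 0 < a) (h : a ≤ exp (-t)) (m : ℕ) :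
    exp (m * t) ≤ (a ^ m)⁻¹ := by
  rw [exp_nat_mul, ← inv_inv (exp t), inv_pow, ← exp_neg]
  exact inv_anti₀ (pow_pos ha m) (pow_le_pow_left₀ ha.le h m)

-- `lintegral_mono_ae` needs no measurability of `f`, so neither does this bound.
lemma ofReal_sub_mul_le_setLIntegral_Ioc {f : ℝ → ℝ≥0∞} {a b c : ℝ} {M : ℝ≥0∞} (hab : a ≤ b)
    (hM : ∀ z ∈ Ioc b c, M ≤ f z) :
    ENNReal.ofReal (c - b) * M ≤ ∫⁻ z in Ioc a c, f z :=
  calc ENNReal.ofReal (c - b) * M = ∫⁻ _ in Ioc b c, M := by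
        rw [setLIntegral_const, volume_Ioc, mul_comm]
    _ ≤ ∫⁻ z in Ioc b c, f z := lintegral_mono_ae (ae_restrict_of_forall_mem measurableSet_Ioc hM)
    _ ≤ ∫⁻ z in Ioc a c, f z := lintegral_mono_set (Ioc_subset_Ioc_left hab)

lemma half_exp_le_inv_mul_setLIntegral_inv_pow {h : ℝ → ℝ} {d δ T : ℝ} (m : ℕ)
    (hd : 0 ≤ d) (hδ : 0 ≤ δ) (hT : 0 < T)
    (hh : ∀ z, 0 < z → 0 < |h z| ∧ |h z| ≤ exp (-d * z ^ δ)) :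
    ENNReal.ofReal (1 / 2 * exp (m * d * (T / 2) ^ δ)) ≤
      ENNReal.ofReal T⁻¹ * ∫⁻ z in Ioc 0 T, ENNReal.ofReal ((|h z| ^ m)⁻¹) := by
  have hint : ENNReal.ofReal (T - T / 2) * ENNReal.ofReal (exp (m * d * (T / 2) ^ δ)) ≤
      ∫⁻ z in Ioc 0 T, ENNReal.ofReal ((|h z| ^ m)⁻¹) := by
    refine ofReal_sub_mul_le_setLIntegral_Ioc (by positivity) fun z hz => ?_
    have hz0 : 0 < z := (half_pos hT).trans hz.1
    obtain ⟨hpos, hle⟩ := hh z hz0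
    refine ENNReal.ofReal_le_ofReal (le_trans ?_
      (exp_nat_mul_le_inv_pow (t := d * z ^ δ) hpos (by rwa [neg_mul] at hle) m))
    rw [← mul_assoc]
    gcongr
    exact hz.1.le
  calc ENNReal.ofReal (1 / 2 * exp (m * d * (T / 2) ^ δ))
      = ENNReal.ofReal T⁻¹ * (ENNReal.ofReal (T - T / 2) *
          ENNReal.ofReal (exp (m * d * (T / 2) ^ δ))) := by
        rw [← ENNReal.ofReal_mul (by linarith), ← ENNReal.ofReal_mul (by positivity)]
        field_simp
        ring_nf
    _ ≤ _ := by gcongr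

lemma tendsto_mul_rpow_sub_mul_atTop {c δ : ℝ} (hc : 0 < c) (hδ : 1 < δ) (θ : ℝ) :
    Tendsto (fun x : ℝ => c * x ^ δ - θ * x) atTop atTop := by
  have hfactor : Tendsto (fun x : ℝ => x * (c * x ^ (δ - 1) - θ)) atTop atTop :=
    tendsto_id.atTop_mul_atTop₀ <| tendsto_atTop_add_const_right _ _ <|
      (tendsto_rpow_atTop (by linarith)).const_mul_atTop hc
  refine hfactor.congr' ?_
  filter_upwards [eventually_gt_atTop 0] with x hx
  rw [rpow_sub_one hx.ne']
  field_simp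

lemma tendsto_inv_mul_setLIntegral_inv_pow_div_exp_atTop {h : ℝ → ℝ} {m : ℕ} {d δ a : ℝ}
    (hm : 0 < m) (hd : 0 < d) (hδ : 1 < δ) (ha : 0 < a)
    (hh : ∀ z, 0 < z → 0 < |h z| ∧ |h z| ≤ exp (-d * z ^ δ)) (θ : ℝ) :
    Tendsto (fun n : ℕ => (ENNReal.ofReal (a / n) *
        ∫⁻ z in Ioc 0 ((n : ℝ) / a), ENNReal.ofReal ((|h z| ^ m)⁻¹)) /
        ENNReal.ofReal (exp (θ * n))) atTop (nhds ⊤) := by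
  set c := m * d / (2 * a) ^ δ with hc_def
  have hc : 0 < c := by positivity
  have hlower : ∀ n : ℕ, 0 < n → ENNReal.ofReal (1 / 2 * exp (c * (n : ℝ) ^ δ - θ * n)) ≤
      (ENNReal.ofReal (a / n) * ∫⁻ z in Ioc 0 ((n : ℝ) / a), ENNReal.ofReal ((|h z| ^ m)⁻¹)) /
        ENNReal.ofReal (exp (θ * n)) := by
    intro n hn
    have hT : (0 : ℝ) < n / a := by positivity
    have hcT : c * (n : ℝ) ^ δ = m * d * ((n : ℝ) / a / 2) ^ δ := by
      rw [div_div, mul_comm a 2, div_rpow (by positivity) (by positivity), hc_def]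
      ring
    rw [exp_sub, ← mul_div_assoc, ENNReal.ofReal_div_of_pos (exp_pos _), hcT, ← inv_div (n : ℝ) a]
    gcongr
    exact half_exp_le_inv_mul_setLIntegral_inv_pow m hd.le (by linarith) hT hh
  have hreal : Tendsto (fun n : ℕ => 1 / 2 * exp (c * (n : ℝ) ^ δ - θ * n)) atTop atTop :=
    (tendsto_exp_atTop.comp <| (tendsto_mul_rpow_sub_mul_atTop hc hδ θ).comp
      tendsto_natCast_atTop_atTop).const_mul_atTop (by norm_num)
  exact tendsto_nhds_top_mono (ENNReal.tendsto_ofReal_atTop.comp hreal)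
    ((eventually_gt_atTop 0).mono hlower)

lemma ENNReal.eventually_mul_lt_of_tendsto_div_top {u v : ℕ → ℝ≥0∞}
    (h : Tendsto (fun n => u n / v n) atTop (nhds ⊤)) {K : ℝ≥0∞} (hK : K ≠ ⊤) :
    ∀ᶠ n in atTop, K * v n < u n :=
  (h.eventually (eventually_gt_nhds hK.lt_top)).mono fun _ => ENNReal.mul_lt_of_lt_div

theorem stmt_12_general (k : ℕ) (hk : 1 ≤ k)
    (d δ Γ : ℝ) (hd : 0 < d) (hδ : 1 < δ)
    (γ : ℝ → ℝ) (hγ : ∀ y : ℝ, 0 < γ y ∧ γ y ≤ Γ)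
    (g : ℝ → ℝ → ℝ)
    (hgub : ∀ y z : ℝ, 0 < z → 0 < |g y z| ∧ |g y z| ≤ Real.exp (-d * z ^ δ)) :
    (∀ θ : ℝ, 0 < θ → ∀ p : ℝ, 0 ≤ p → ∀ C : ℝ, 0 < C →
      ∃ n : ℕ, 1 ≤ n ∧ ∃ y : ℝ,
        ENNReal.ofReal (C * (1 + |y| ^ p) * Real.exp (θ * n)) <
          ENNReal.ofReal (γ y / n) *
            ∫⁻ z in Set.Ioc (0 : ℝ) ((n : ℝ) / γ y),
              ENNReal.ofReal ((|g y z| ^ (2 * k))⁻¹)) ∧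
    (∀ y : ℝ, ∀ θ : ℝ, 0 < θ →
      Tendsto (fun n : ℕ =>
          (ENNReal.ofReal (γ y / n) *
            ∫⁻ z in Set.Ioc (0 : ℝ) ((n : ℝ) / γ y),
              ENNReal.ofReal ((|g y z| ^ (2 * k))⁻¹)) /
            ENNReal.ofReal (Real.exp (θ * n)))
        atTop (nhds ⊤)) := by
  have growth (y θ : ℝ) := tendsto_inv_mul_setLIntegral_inv_pow_div_exp_atTop (m := 2 * k)
    (by omega) hd hδ (hγ y).1 (hgub y) θ
  refine ⟨fun θ _ p _ C _ => ?_, fun y θ _ => growth y θ⟩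
  obtain ⟨n, hlt, hn⟩ := ((ENNReal.eventually_mul_lt_of_tendsto_div_top (growth 0 θ)
    ENNReal.ofReal_ne_top).and (eventually_ge_atTop 1)).exists
  exact ⟨n, hn, 0, by rwa [ENNReal.ofReal_mul' (exp_pos _).le]⟩

/-- Counterexample: if `0 < |g(y,z)| ≤ e^{−dz^δ}` with `δ > 1` and `γ` is bounded, then
the bound (albr) never holds: for every `θ, p, C` there are `n, y` violating it, and in
fact for each fixed `y` the quantity `(γ(y)/n)∫_0^{n/γ(y)}|g(y,z)|^{−2k}dz` grows faster
than any exponential `e^{θn}`. -/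
theorem stmt_12 (k : ℕ) (hk : 1 ≤ k)
    (d δ Γ : ℝ) (hd : 0 < d) (hδ : 1 < δ) (hΓ : 0 < Γ)
    (γ : ℝ → ℝ) (hγ : ∀ y : ℝ, 0 < γ y ∧ γ y ≤ Γ)
    (g : ℝ → ℝ → ℝ) (hgmeas : Measurable (Function.uncurry g))
    (hgub : ∀ y z : ℝ, 0 < z → 0 < |g y z| ∧ |g y z| ≤ Real.exp (-d * z ^ δ)) :
    (∀ θ : ℝ, 0 < θ → ∀ p : ℝ, 0 ≤ p → ∀ C : ℝ, 0 < C →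
      ∃ n : ℕ, 1 ≤ n ∧ ∃ y : ℝ,
        ENNReal.ofReal (C * (1 + |y| ^ p) * Real.exp (θ * n)) <
          ENNReal.ofReal (γ y / n) *
            ∫⁻ z in Set.Ioc (0 : ℝ) ((n : ℝ) / γ y),
              ENNReal.ofReal ((|g y z| ^ (2 * k))⁻¹)) ∧
    (∀ y : ℝ, ∀ θ : ℝ, 0 < θ →
      Tendsto (fun n : ℕ =>
          (ENNReal.ofReal (γ y / n) *
            ∫⁻ z in Set.Ioc (0 : ℝ) ((n : ℝ) / γ y),
              ENNReal.ofReal ((|g y z| ^ (2 * k))⁻¹)) /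
            ENNReal.ofReal (Real.exp (θ * n)))
        atTop (nhds ⊤)) :=
  stmt_12_general k hk d δ Γ hd hδ γ hγ g hgub
end

section
/- Let l ≥ 1 be an integer and M > 0. Let J ⊆ ℝ be an open interval and f : J → ℝ a C^l function with f'(u) ≠ 0 for all u ∈ J and |f^{(j)}(u)| ≤ M for all u ∈ J and j = 1,…,l. Let ξ be the inverse of f, defined on the open interval f(J). Then ξ is C^l and there exists a constant K, depending only on l and M, such that for all u ∈ f(J): |ξ^{(l)}(u)| ≤ K |f'(ξ(u))|^{−2l+1}. -/
open Set Filter Topology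
open scoped Nat

/-!
Differentiating `ξ' = 1 / f' ∘ ξ` repeatedly gives, by induction on `k`,
`ξ^{(k+1)} = P_k ∘ ξ / (f' ∘ ξ)^{2k+1}` with `P_0 = 1` and `P_{k+1} = P_k' f' - (2k+1) P_k f''`
(`P_k = inverseNumerator f k`). Thus `P_k` is a polynomial in `f', …, f^{(k+1)}`, and Leibniz's
rule together with `|f^{(i)}| ≤ M` bounds its derivatives of order `j < l - k` by
`(2^l M)^k k!`. The case `k = l - 1`, `j = 0` gives `K`.
-/

section IteratedDerivWithin

variable {J : Set ℝ} {u : ℝ}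

theorem iteratedDerivWithin_deriv_of_isOpen (hJ : IsOpen J) (hu : u ∈ J) (g : ℝ → ℝ) (n : ℕ) :
    iteratedDerivWithin n (deriv g) J u = iteratedDerivWithin (n + 1) g J u := by
  rw [iteratedDerivWithin_of_isOpen hJ hu, iteratedDerivWithin_of_isOpen hJ hu,
    iteratedDeriv_succ']

theorem abs_iteratedDerivWithin_mul_le (hJ : UniqueDiffOn ℝ J) (hu : u ∈ J) {A B : ℝ → ℝ}
    {j : ℕ} (hA : ContDiffOn ℝ j A J) (hB : ContDiffOn ℝ j B J) {a b : ℝ}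
    (ha : ∀ i ≤ j, |iteratedDerivWithin i A J u| ≤ a)
    (hb : ∀ i ≤ j, |iteratedDerivWithin i B J u| ≤ b) :
    |iteratedDerivWithin j (fun u => A u * B u) J u| ≤ 2 ^ j * (a * b) := by
  have ha0 : 0 ≤ a := (abs_nonneg _).trans (ha 0 j.zero_le)
  simp only [← Real.norm_eq_abs, ← norm_iteratedFDerivWithin_eq_norm_iteratedDerivWithin] at *
  calc _ ≤ ∑ i ∈ Finset.range (j + 1), (j.choose i : ℝ) *
          ‖iteratedFDerivWithin ℝ i A J u‖ * ‖iteratedFDerivWithin ℝ (j - i) B J u‖ :=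
        norm_iteratedFDerivWithin_mul_le hA hB hJ hu le_rfl
    _ ≤ ∑ i ∈ Finset.range (j + 1), (j.choose i : ℝ) * (a * b) := by
        refine Finset.sum_le_sum fun i hi => ?_
        have hij : i ≤ j := Nat.lt_succ_iff.mp (Finset.mem_range.mp hi)
        rw [mul_assoc]
        gcongr
        exacts [ha i hij, hb (j - i) (Nat.sub_le j i)]
    _ = 2 ^ j * (a * b) := by
        rw [← Finset.sum_mul, ← Nat.cast_sum, Nat.sum_range_choose, Nat.cast_pow, Nat.cast_ofNat]

end IteratedDerivWithin

section LocalInverse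

theorem ContDiffAt.contDiffAt_of_local_left_inverse {𝕂 E F : Type*} [RCLike 𝕂]
    [NormedAddCommGroup E] [NormedSpace 𝕂 E] [NormedAddCommGroup F] [NormedSpace 𝕂 F]
    [CompleteSpace E] {f : E → F} {g : F → E} {f' : E ≃L[𝕂] F} {a : E} {n : WithTop ℕ∞}
    (hf : ContDiffAt 𝕂 n f a) (hf' : HasFDerivAt f (f' : E →L[𝕂] F) a) (hn : n ≠ 0)
    (hg : ∀ᶠ x in 𝓝 a, g (f x) = x) : ContDiffAt 𝕂 n g (f a) :=
  (hf.to_localInverse hf' hn).congr_of_eventuallyEq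
    ((hf.hasStrictFDerivAt' hf' hn).localInverse_unique hg)

theorem IsOpen.image_of_hasStrictDerivAt {J : Set ℝ} {f f' : ℝ → ℝ} (hJ : IsOpen J)
    (hf : ∀ u ∈ J, HasStrictDerivAt f (f' u) u) (hf' : ∀ u ∈ J, f' u ≠ 0) : IsOpen (f '' J) := by
  rw [isOpen_iff_mem_nhds]
  rintro _ ⟨u, hu, rfl⟩
  rw [← (hf u hu).map_nhds_eq (hf' u hu)]
  exact image_mem_map (hJ.mem_nhds hu)

variable {J : Set ℝ} {f ξ : ℝ → ℝ} {n : WithTop ℕ∞}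

theorem contDiffOn_image_of_leftInvOn (hJ : IsOpen J) (hf : ContDiffOn ℝ n f J) (hn : n ≠ 0)
    (hf' : ∀ u ∈ J, deriv f u ≠ 0) (hξ : ∀ u ∈ J, ξ (f u) = u) : ContDiffOn ℝ n ξ (f '' J) := by
  rintro _ ⟨u, hu, rfl⟩
  have hfu : ContDiffAt ℝ n f u := hf.contDiffAt (hJ.mem_nhds hu)
  have hfd := ((hfu.differentiableAt hn).hasDerivAt).hasFDerivAt_equiv (hf' u hu)
  exact (hfu.contDiffAt_of_local_left_inverse hfd hn
    (eventually_of_mem (hJ.mem_nhds hu) hξ)).contDiffWithinAt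

end LocalInverse

noncomputable def inverseNumerator (f : ℝ → ℝ) : ℕ → ℝ → ℝ
  | 0 => fun _ => 1
  | k + 1 => fun u => deriv (inverseNumerator f k) u * deriv f u -
      (2 * k + 1) * (inverseNumerator f k u * deriv (deriv f) u)

section InverseNumerator

variable {J : Set ℝ} {f ξ : ℝ → ℝ} {l : ℕ}

theorem contDiffOn_inverseNumerator (hJ : IsOpen J) (hf : ContDiffOn ℝ l f J) :
    ∀ {k : ℕ}, k < l → ContDiffOn ℝ (l - 1 - k : ℕ) (inverseNumerator f k) J
  | 0, _ => contDiffOn_const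
  | k + 1, hk => by
    have hP := contDiffOn_inverseNumerator hJ hf (k := k) (by omega)
    have hP' : ContDiffOn ℝ (l - 1 - (k + 1) : ℕ) (deriv (inverseNumerator f k)) J :=
      hP.deriv_of_isOpen hJ (by norm_cast; omega)
    have hf' : ContDiffOn ℝ (l - 1 : ℕ) (deriv f) J := hf.deriv_of_isOpen hJ (by norm_cast; omega)
    have hf'' : ContDiffOn ℝ (l - 1 - (k + 1) : ℕ) (deriv (deriv f)) J :=
      hf'.deriv_of_isOpen hJ (by norm_cast; omega)
    exact (hP'.mul (hf'.of_le (by norm_cast; omega))).sub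
      (contDiffOn_const.mul ((hP.of_le (by norm_cast; omega)).mul hf''))

theorem abs_iteratedDerivWithin_inverseNumerator_le (hJ : IsOpen J) (hf : ContDiffOn ℝ l f J)
    {M : ℝ} (hM : 0 ≤ M)
    (hfM : ∀ u ∈ J, ∀ i : ℕ, 1 ≤ i → i ≤ l → |iteratedDerivWithin i f J u| ≤ M)
    {u : ℝ} (hu : u ∈ J) :
    ∀ {k j : ℕ}, j + k < l →
      |iteratedDerivWithin j (inverseNumerator f k) J u| ≤ (2 ^ l * M) ^ k * k !
  | 0, j, _ => by
    rw [inverseNumerator, iteratedDerivWithin_const]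
    split_ifs <;> simp
  | k + 1, j, hjk => by
    set P := inverseNumerator f k
    set C := (2 ^ l * M) ^ k * (k ! : ℝ)
    have hPk := contDiffOn_inverseNumerator hJ hf (k := k) (by omega)
    have hP : ContDiffOn ℝ j P J := hPk.of_le (by norm_cast; omega)
    have hP' : ContDiffOn ℝ j (deriv P) J := hPk.deriv_of_isOpen hJ (by norm_cast; omega)
    have hf' : ContDiffOn ℝ (l - 1 : ℕ) (deriv f) J := hf.deriv_of_isOpen hJ (by norm_cast; omega)
    have hf'' : ContDiffOn ℝ j (deriv (deriv f)) J := hf'.deriv_of_isOpen hJ (by norm_cast; omega)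
    have hA : |iteratedDerivWithin j (fun u => deriv P u * deriv f u) J u| ≤ 2 ^ j * (C * M) := by
      refine abs_iteratedDerivWithin_mul_le hJ.uniqueDiffOn hu hP'
        (hf'.of_le (by norm_cast; omega)) (fun i hi => ?_) (fun i hi => ?_)
      · rw [iteratedDerivWithin_deriv_of_isOpen hJ hu]
        exact abs_iteratedDerivWithin_inverseNumerator_le hJ hf hM hfM hu (by omega)
      · rw [iteratedDerivWithin_deriv_of_isOpen hJ hu]
        exact hfM u hu (i + 1) (by omega) (by omega)
    have hB : |iteratedDerivWithin j (fun u => P u * deriv (deriv f) u) J u| ≤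
        2 ^ j * (C * M) := by
      refine abs_iteratedDerivWithin_mul_le hJ.uniqueDiffOn hu hP hf''
        (fun i hi => ?_) (fun i hi => ?_)
      · exact abs_iteratedDerivWithin_inverseNumerator_le hJ hf hM hfM hu (by omega)
      · rw [iteratedDerivWithin_deriv_of_isOpen hJ hu, iteratedDerivWithin_deriv_of_isOpen hJ hu]
        exact hfM u hu (i + 1 + 1) (by omega) (by omega)
    have hsplit : iteratedDerivWithin j (inverseNumerator f (k + 1)) J u =
        iteratedDerivWithin j (fun u => deriv P u * deriv f u) J u -
          (2 * k + 1) * iteratedDerivWithin j (fun u => P u * deriv (deriv f) u) J u := by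
      rw [← iteratedDerivWithin_const_mul_field]
      exact iteratedDerivWithin_sub hu hJ.uniqueDiffOn
        ((hP'.mul (hf'.of_le (by norm_cast; omega))) u hu)
        ((contDiffOn_const.mul (hP.mul hf'')) u hu)
    have hj : (2 : ℝ) ^ (j + 1) ≤ 2 ^ l := pow_le_pow_right₀ one_le_two (by omega)
    have hCM : 0 ≤ C * M := by positivity
    calc |iteratedDerivWithin j (inverseNumerator f (k + 1)) J u|
        ≤ 2 ^ j * (C * M) + (2 * k + 1) * (2 ^ j * (C * M)) := by
          rw [hsplit]
          refine (abs_sub _ _).trans (add_le_add hA ?_)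
          rw [abs_mul, abs_of_nonneg (by positivity)]
          gcongr
      _ = 2 ^ (j + 1) * (k + 1) * (C * M) := by ring
      _ ≤ 2 ^ l * (k + 1) * (C * M) := by gcongr
      _ = (2 ^ l * M) ^ (k + 1) * (k + 1)! := by
          rw [Nat.factorial_succ]
          push_cast
          ring

theorem iteratedDeriv_succ_eq_inverseNumerator (hJ : IsOpen J) (hf : ContDiffOn ℝ l f J)
    (hf' : ∀ u ∈ J, deriv f u ≠ 0) (hξ : ∀ u ∈ J, ξ (f u) = u) {k : ℕ} (hk : k < l) {u : ℝ}
    (hu : u ∈ J) :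
    iteratedDeriv (k + 1) ξ (f u) = inverseNumerator f k u / deriv f u ^ (2 * k + 1) := by
  have hl : (l : WithTop ℕ∞) ≠ 0 := by norm_cast; omega
  have hfd : ∀ u ∈ J, HasStrictDerivAt f (deriv f u) u := fun u hu =>
    (hf.contDiffAt (hJ.mem_nhds hu)).hasStrictDerivAt hl
  have hξd : ∀ u ∈ J, HasDerivAt ξ (deriv f u)⁻¹ (f u) := fun u hu =>
    ((hfd u hu).to_local_left_inverse (hf' u hu)
      (eventually_of_mem (hJ.mem_nhds hu) hξ)).hasDerivAt
  induction k generalizing u with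
  | zero => simp [(hξd u hu).deriv, inverseNumerator]
  | succ k ih =>
    set P := inverseNumerator f k
    have heq : iteratedDeriv (k + 1) ξ =ᶠ[𝓝 (f u)]
        fun w => P (ξ w) / deriv f (ξ w) ^ (2 * k + 1) := by
      filter_upwards [(hJ.image_of_hasStrictDerivAt hfd hf').mem_nhds (mem_image_of_mem f hu)]
      rintro _ ⟨v, hv, rfl⟩
      rw [ih (by omega) hv, hξ v hv]
    have hPd : HasDerivAt P (deriv P u) u :=
      (((contDiffOn_inverseNumerator hJ hf (k := k) (by omega)).differentiableOn
        (by norm_cast; omega)).differentiableAt (hJ.mem_nhds hu)).hasDerivAt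
    have hf'd : HasDerivAt (deriv f) (deriv (deriv f) u) u :=
      (((hf.deriv_of_isOpen hJ (m := (l - 1 : ℕ)) (by norm_cast; omega)).differentiableOn
        (by norm_cast; omega)).differentiableAt (hJ.mem_nhds hu)).hasDerivAt
    have hPξ := hPd.comp_of_eq (f u) (hξd u hu) (hξ u hu).symm
    have hf'ξ := (hf'd.comp_of_eq (f u) (hξd u hu) (hξ u hu).symm).pow (2 * k + 1)
    have hquot : HasDerivAt (fun w => P (ξ w) / deriv f (ξ w) ^ (2 * k + 1)) _ (f u) :=
      hPξ.div hf'ξ (by simpa [hξ u hu] using hf' u hu)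
    rw [iteratedDeriv_succ, heq.deriv_eq, hquot.deriv]
    simp only [Function.comp_apply, hξ u hu, Nat.add_sub_cancel, inverseNumerator, P]
    have := hf' u hu
    field_simp
    push_cast
    ring

end InverseNumerator

/-- Bound (bxi): if `f` is `C^l` on an open interval `J` with `f' ≠ 0` and
`|f^{(j)}| ≤ M` on `J` for `j = 1,…,l`, then its inverse `ξ`, defined on `f(J)`, is `C^l`
and satisfies `|ξ^{(l)}(u)| ≤ K |f'(ξ(u))|^{−2l+1}` for a constant `K = K(l, M)`. -/
theorem stmt_14 (l : ℕ) (hl : 1 ≤ l) (M : ℝ) (hM : 0 < M) :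
    ∃ K : ℝ, ∀ (J : Set ℝ), IsOpen J → J.OrdConnected →
      ∀ f ξ : ℝ → ℝ,
        ContDiffOn ℝ l f J →
        (∀ u ∈ J, derivWithin f J u ≠ 0) →
        (∀ u ∈ J, ∀ j : ℕ, 1 ≤ j → j ≤ l → |iteratedDerivWithin j f J u| ≤ M) →
        (∀ u ∈ J, ξ (f u) = u) →
        (∀ v ∈ f '' J, f (ξ v) = v ∧ ξ v ∈ J) →
        ContDiffOn ℝ l ξ (f '' J) ∧
          ∀ v ∈ f '' J,
            |iteratedDerivWithin l ξ (f '' J) v|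
              ≤ K * (|derivWithin f J (ξ v)| ^ (2 * l - 1))⁻¹ := by
  obtain ⟨n, rfl⟩ : ∃ n, l = n + 1 := ⟨l - 1, by omega⟩
  refine ⟨(2 ^ (n + 1) * M) ^ n * n !, fun J hJ _ f ξ hf hf' hfM hξ _ => ?_⟩
  have hl0 : ((n + 1 : ℕ) : WithTop ℕ∞) ≠ 0 := by norm_cast
  have hd : ∀ u ∈ J, deriv f u ≠ 0 := fun u hu => by
    simpa only [derivWithin_of_isOpen hJ hu] using hf' u hu
  have hfd : ∀ u ∈ J, HasStrictDerivAt f (deriv f u) u := fun u hu =>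
    (hf.contDiffAt (hJ.mem_nhds hu)).hasStrictDerivAt hl0
  refine ⟨contDiffOn_image_of_leftInvOn hJ hf hl0 hd hξ, ?_⟩
  rintro _ ⟨u, hu, rfl⟩
  have hP := abs_iteratedDerivWithin_inverseNumerator_le hJ hf hM.le hfM hu
    (k := n) (j := 0) (by omega)
  rw [iteratedDerivWithin_zero] at hP
  rw [iteratedDerivWithin_of_isOpen (hJ.image_of_hasStrictDerivAt hfd hd) (mem_image_of_mem f hu),
    iteratedDeriv_succ_eq_inverseNumerator hJ hf hd hξ (k := n) (by omega) hu, hξ u hu,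
    derivWithin_of_isOpen hJ hu, abs_div, abs_pow, div_eq_mul_inv,
    show 2 * (n + 1) - 1 = 2 * n + 1 by omega]
  gcongr
end

section
/- Let t > 0, θ > 0, an integer k ≥ 1 and B ≥ 0. Let g : ℝ → [0,∞) be such that for every integer n ≥ 0 and every ξ ∈ ℝ with |ξ| ≥ 1: |ξ|^k g(ξ) ≤ |ξ|^k e^{−nt} + B e^{θn}. Then for every ξ with |ξ| ≥ 1: g(ξ) ≤ (e^t + B) |ξ|^{−kt/(θ+t)}. -/
/-- Optimization step in the proof of the main theorem: from the family of bounds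
`|ξ|^k g(ξ) ≤ |ξ|^k e^{-nt} + B e^{θn}` (n ∈ ℕ), one deduces the polynomial decay
`g(ξ) ≤ (e^t + B) |ξ|^{-kt/(θ+t)}` for `|ξ| ≥ 1`. -/
theorem stmt_15 (t θ : ℝ) (ht : 0 < t) (hθ : 0 < θ) (k : ℕ) (hk : 1 ≤ k)
    (B : ℝ) (hB : 0 ≤ B) (g : ℝ → ℝ) (hg : ∀ ξ, 0 ≤ g ξ)
    (hyp : ∀ n : ℕ, ∀ ξ : ℝ, 1 ≤ |ξ| →
      |ξ| ^ k * g ξ ≤ |ξ| ^ k * Real.exp (-(n * t)) + B * Real.exp (θ * n)) :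
    ∀ ξ : ℝ, 1 ≤ |ξ| →
      g ξ ≤ (Real.exp t + B) * |ξ| ^ (-((k : ℝ) * t / (θ + t))) := by
  intro ξ hξ
  have hx0 : (0:ℝ) < |ξ| := lt_of_lt_of_le one_pos hξ
  set L := Real.log |ξ| with hLdef
  have hL0 : 0 ≤ L := Real.log_nonneg hξ
  have hθt : 0 < θ + t := by linarith
  set c : ℝ := (k:ℝ) * t / (θ + t) with hc
  set n : ℕ := ⌊(k:ℝ) / (θ + t) * L⌋₊ with hn
  have hα0 : 0 ≤ (k:ℝ) / (θ + t) * L := by positivity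
  have hn1 : (n:ℝ) ≤ (k:ℝ) / (θ + t) * L := Nat.floor_le hα0
  have hn2 : (k:ℝ) / (θ + t) * L < n + 1 := Nat.lt_floor_add_one _
  have key := hyp n ξ hξ
  have hxk : |ξ| ^ k = Real.exp ((k:ℝ) * L) := by
    rw [← Real.exp_log (pow_pos hx0 k), Real.log_pow]
  have hrpow : |ξ| ^ (-c) = Real.exp (-c * L) := by
    rw [Real.rpow_def_of_pos hx0, mul_comm]
  rw [hxk] at key
  rw [hrpow]
  have hE : Real.exp ((k:ℝ)*L) * Real.exp (-(n*t)) + B * Real.exp (θ*n)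
      ≤ Real.exp ((k:ℝ)*L) * ((Real.exp t + B) * Real.exp (-c * L)) := by
    have h1 : Real.exp ((k:ℝ)*L) * Real.exp (-((n:ℝ)*t))
        ≤ Real.exp ((k:ℝ)*L) * (Real.exp t * Real.exp (-c*L)) := by
      rw [← Real.exp_add, ← Real.exp_add, ← Real.exp_add]
      apply Real.exp_le_exp.2
      have h5 : c * L ≤ ((n:ℝ)+1) * t := by
        have h6 := mul_le_mul_of_nonneg_right hn2.le ht.le
        calc c * L = (k:ℝ)/(θ+t) * L * t := by rw [hc]; ring
          _ ≤ ((n:ℝ)+1) * t := h6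
      linarith
    have h2 : B * Real.exp (θ*n) ≤ Real.exp ((k:ℝ)*L) * (B * Real.exp (-c*L)) := by
      rw [mul_comm (Real.exp ((k:ℝ)*L)) _, mul_assoc, ← Real.exp_add]
      apply mul_le_mul_of_nonneg_left _ hB
      apply Real.exp_le_exp.2
      have h3 : θ * n ≤ θ * ((k:ℝ)/(θ+t) * L) := mul_le_mul_of_nonneg_left hn1 hθ.le
      have h4 : -c*L + (k:ℝ)*L = θ * ((k:ℝ)/(θ+t) * L) := by
        rw [hc]; field_simp; ring
      linarith
    linarith
  exact le_of_mul_le_mul_left (key.trans hE) (Real.exp_pos _)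
end

section
/- Let φ : ℝ → ℝ be of class C¹ with φ' ∈ L¹(ℝ), let a ≥ 0, and let τ : ℝ → ℝ be a measurable map with |τ(y) − y| ≤ a for all y ∈ ℝ. Then ∫_ℝ |φ(τ(y)) − φ(y)| dy ≤ 2a ‖φ'‖_{L¹(ℝ)}. -/
/-!
Since `φ` is `C¹`, `|φ(τ y) - φ y|` is at most the mass of `|φ'|` on `[y - a, y + a]`. Integrating
in `y` and exchanging the order of integration (after translating the window to `[-a, a]`),
every point `u` is counted once for each `y` within distance `a`, i.e. with weight `2a`.
-/

open MeasureTheory Set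

theorem enorm_sub_le_lintegral_deriv_Icc_of_abs_sub_le {E : Type*} [NormedAddCommGroup E]
    [NormedSpace ℝ E] {f : ℝ → E} (hf : ContDiff ℝ 1 f) {x y a : ℝ} (h : |x - y| ≤ a) :
    ‖f x - f y‖ₑ ≤ ∫⁻ u in Icc (y - a) (y + a), ‖deriv f u‖ₑ := by
  obtain ⟨hlo, hhi⟩ := abs_sub_le_iff.mp h
  rcases le_total y x with hyx | hxy
  · calc ‖f x - f y‖ₑ ≤ ∫⁻ u in Icc y x, ‖deriv f u‖ₑ :=
          enorm_sub_le_lintegral_deriv_of_contDiffOn_Icc hf.contDiffOn hyx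
      _ ≤ _ := lintegral_mono_set (Icc_subset_Icc (by linarith) (by linarith))
  · calc ‖f x - f y‖ₑ = ‖f y - f x‖ₑ := enorm_sub_rev _ _
      _ ≤ ∫⁻ u in Icc x y, ‖deriv f u‖ₑ :=
          enorm_sub_le_lintegral_deriv_of_contDiffOn_Icc hf.contDiffOn hxy
      _ ≤ _ := lintegral_mono_set (Icc_subset_Icc (by linarith) (by linarith))

theorem lintegral_setLIntegral_Icc_sub_add {g : ℝ → ENNReal} (hg : Measurable g) (a : ℝ) :
    ∫⁻ y, ∫⁻ u in Icc (y - a) (y + a), g u = ENNReal.ofReal (2 * a) * ∫⁻ u, g u := by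
  have htranslate (y : ℝ) :
      ∫⁻ u in Icc (y - a) (y + a), g u = ∫⁻ t in Icc (-a) a, g (t + y) := by
    rw [← (measurePreserving_add_right volume y).setLIntegral_comp_preimage_emb
      (measurableEmbedding_addRight y), preimage_add_const_Icc,
      sub_sub_cancel_left, add_sub_cancel_left]
  calc ∫⁻ y, ∫⁻ u in Icc (y - a) (y + a), g u
      = ∫⁻ y, ∫⁻ t in Icc (-a) a, g (t + y) := lintegral_congr fun y => htranslate y
    _ = ∫⁻ t in Icc (-a) a, ∫⁻ y, g (t + y) :=
        lintegral_lintegral_swap (hg.comp (measurable_snd.add measurable_fst)).aemeasurable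
    _ = ∫⁻ t in Icc (-a) a, ∫⁻ u, g u :=
        lintegral_congr fun t => lintegral_add_left_eq_self g t
    _ = ENNReal.ofReal (2 * a) * ∫⁻ u, g u := by
        rw [setLIntegral_const, Real.volume_Icc, mul_comm, sub_neg_eq_add, ← two_mul]

theorem stmt_16_general (φ : ℝ → ℝ) (hφ : ContDiff ℝ 1 φ)
    (hφ' : Integrable (deriv φ))
    (a : ℝ) (ha : 0 ≤ a) (τ : ℝ → ℝ)
    (hτ : ∀ y : ℝ, |τ y - y| ≤ a) :
    ∫⁻ y : ℝ, ENNReal.ofReal |φ (τ y) - φ y|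
      ≤ ENNReal.ofReal (2 * a * ∫ u : ℝ, |deriv φ u|) := by
  calc ∫⁻ y, ENNReal.ofReal |φ (τ y) - φ y|
      = ∫⁻ y, ‖φ (τ y) - φ y‖ₑ := by simp only [Real.enorm_eq_ofReal_abs]
    _ ≤ ∫⁻ y, ∫⁻ u in Icc (y - a) (y + a), ‖deriv φ u‖ₑ :=
        lintegral_mono fun y => enorm_sub_le_lintegral_deriv_Icc_of_abs_sub_le hφ (hτ y)
    _ = ENNReal.ofReal (2 * a) * ∫⁻ u, ‖deriv φ u‖ₑ :=
        lintegral_setLIntegral_Icc_sub_add (measurable_deriv φ).enorm a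
    _ = ENNReal.ofReal (2 * a * ∫ u, |deriv φ u|) := by
        simp only [← Real.norm_eq_abs]
        rw [← ofReal_integral_norm_eq_lintegral_enorm hφ', ← ENNReal.ofReal_mul (by positivity)]

/-- If `φ : ℝ → ℝ` is `C¹` with `φ' ∈ L¹(ℝ)`, `a ≥ 0` and `τ : ℝ → ℝ` is measurable with
`|τ(y) − y| ≤ a` for all `y`, then `∫ |φ(τ(y)) − φ(y)| dy ≤ 2a ‖φ'‖_{L¹}`. -/
theorem stmt_16 (φ : ℝ → ℝ) (hφ : ContDiff ℝ 1 φ)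
    (hφ' : Integrable (deriv φ))
    (a : ℝ) (ha : 0 ≤ a) (τ : ℝ → ℝ) (hτmeas : Measurable τ)
    (hτ : ∀ y : ℝ, |τ y - y| ≤ a) :
    ∫⁻ y : ℝ, ENNReal.ofReal |φ (τ y) - φ y|
      ≤ ENNReal.ofReal (2 * a * ∫ u : ℝ, |deriv φ u|) :=
  stmt_16_general φ hφ hφ' a ha τ hτ
end
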